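/- arXiv:1411.8005 — 7 statements merged into one kernel-verified Lean document; each statement's English description precedes it below -/
import Mathlib

section
/- Let G : ℝ → ℝ be continuously differentiable and suppose G has the KL property at every point of ℝ. Let ū be a critical point of G. Then there exists η > 0 such that for every u with |u − ū| < η, if G(u) = G(ū) then G′(u) = 0. -/
open Real Set Metric Filter Topology

noncomputable section

/-- `φ` is a desingularizing function of `G : ℝ → ℝ` at `ub` on `(ub - η, ub + η)`,
with domain `[0, r₀)`. -/
def DesingOn1 (G : ℝ → ℝ) (ub η r₀ : ℝ) (φ : ℝ → ℝ) : Prop :=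
  0 < r₀ ∧ 0 < η ∧ φ 0 = 0 ∧ (∀ s ∈ Set.Ico (0:ℝ) r₀, 0 ≤ φ s) ∧
  ContinuousOn φ (Set.Ico 0 r₀) ∧
  (∀ s ∈ Set.Ioo (0:ℝ) r₀, DifferentiableAt ℝ φ s) ∧
  ContinuousOn (deriv φ) (Set.Ioo 0 r₀) ∧
  (∀ s ∈ Set.Ioo (0:ℝ) r₀, 0 < deriv φ s) ∧
  (∀ u : ℝ, |u - ub| < η → |G u - G ub| < r₀) ∧
  (∀ u : ℝ, |u - ub| < η → G u ≠ G ub →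
    1 ≤ deriv φ (|G u - G ub|) * |deriv G u|)

/-! If `G u = G ū` and `G′ u ≠ 0` at some `u` in the KL neighbourhood of `ū`, then `G` leaves the
level `G ū` immediately next to `u` on the side of `ū`. On the segment between `u` and `ū`, the
maximum of `|G - G ū|` is then positive and attained at an interior point `w`, a local extremum
of `G` with `G w ≠ G ū`. So `G′ w = 0`, which the KL inequality forbids off the level set. -/

theorem Filter.Eventually.exists_mem_uIoo {α : Type*} [TopologicalSpace α] [LinearOrder α]
    [OrderTopology α] [DenselyOrdered α] {p : α → Prop} {a b : α}
    (h : ∀ᶠ x in 𝓝[≠] a, p x) (hab : a ≠ b) : ∃ x ∈ uIoo a b, p x := by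
  have : (𝓝[uIoo a b] a).NeBot :=
    mem_closure_iff_nhdsWithin_neBot.1 (by rw [closure_uIoo hab]; exact left_mem_uIcc)
  have hle : 𝓝[uIoo a b] a ≤ 𝓝[≠] a :=
    nhdsWithin_mono a fun x hx => ne_of_mem_of_not_mem hx left_notMem_uIoo
  obtain ⟨x, hpx, hx⟩ := ((h.filter_mono hle).and self_mem_nhdsWithin).exists
  exact ⟨x, hx, hpx⟩

theorem IsLocalMax.isLocalExtr_of_abs_sub {α : Type*} [TopologicalSpace α] {f : α → ℝ} {c : ℝ}
    {w : α} (h : IsLocalMax (fun x => |f x - c|) w) (hw : f w ≠ c) : IsLocalExtr f w := by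
  rcases hw.lt_or_gt with hlt | hgt
  · refine IsMinFilter.isExtr ?_
    filter_upwards [h] with x hx
    rw [abs_of_neg (sub_neg.2 hlt)] at hx
    linarith [neg_abs_le (f x - c)]
  · refine IsMaxFilter.isExtr ?_
    filter_upwards [h] with x hx
    rw [abs_of_pos (sub_pos.2 hgt)] at hx
    linarith [le_abs_self (f x - c)]

section LocalExtr

variable {f : ℝ → ℝ} {a b c z : ℝ}

theorem exists_isLocalExtr_Ioo_ne (hf : ContinuousOn f (Icc a b)) (ha : f a = c)
    (hb : f b = c) (hz : z ∈ Ioo a b) (hfz : f z ≠ c) :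
    ∃ w ∈ Ioo a b, f w ≠ c ∧ IsLocalExtr f w := by
  obtain ⟨w, hw, hmax⟩ := isCompact_Icc.exists_isMaxOn (nonempty_Icc.2 (hz.1.trans hz.2).le)
    (hf.sub continuousOn_const).abs
  have hzw : |f z - c| ≤ |f w - c| := hmax (Ioo_subset_Icc_self hz)
  have hpos : 0 < |f w - c| := hzw.trans_lt' (abs_pos.2 (sub_ne_zero.2 hfz))
  have hfw : f w ≠ c := fun h => by simp [h] at hpos
  have hwIoo : w ∈ Ioo a b :=
    ⟨hw.1.lt_of_ne (by rintro rfl; exact hfw ha), hw.2.lt_of_ne (by rintro rfl; exact hfw hb)⟩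
  exact ⟨w, hwIoo, hfw,
    (hmax.isLocalMax (Icc_mem_nhds hwIoo.1 hwIoo.2)).isLocalExtr_of_abs_sub hfw⟩

theorem exists_isLocalExtr_uIoo_ne (hf : ContinuousOn f (uIcc a b)) (ha : f a = c)
    (hb : f b = c) (hz : z ∈ uIoo a b) (hfz : f z ≠ c) :
    ∃ w ∈ uIoo a b, f w ≠ c ∧ IsLocalExtr f w := by
  rcases le_total a b with hab | hba
  · rw [uIcc_of_le hab] at hf
    rw [uIoo_of_le hab] at hz ⊢
    exact exists_isLocalExtr_Ioo_ne hf ha hb hz hfz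
  · rw [uIcc_of_ge hba] at hf
    rw [uIoo_of_ge hba] at hz ⊢
    exact exists_isLocalExtr_Ioo_ne hf hb ha hz hfz

end LocalExtr

theorem DesingOn1.deriv_ne_zero {G φ : ℝ → ℝ} {ub η r₀ u : ℝ} (hD : DesingOn1 G ub η r₀ φ)
    (hu : |u - ub| < η) (hGu : G u ≠ G ub) : deriv G u ≠ 0 := fun h => by
  have hKL := hD.2.2.2.2.2.2.2.2.2 u hu hGu
  rw [h, abs_zero, mul_zero] at hKL
  exact one_pos.not_ge hKL

theorem stmt1 (G : ℝ → ℝ) (hG : ContDiff ℝ 1 G)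
    (hKL : ∀ x : ℝ, ∃ η r₀ φ, DesingOn1 G x η r₀ φ)
    (ub : ℝ) (hub : deriv G ub = 0) :
    ∃ η > 0, ∀ u : ℝ, |u - ub| < η → G u = G ub → deriv G u = 0 := by
  obtain ⟨η, r₀, φ, hD⟩ := hKL ub
  refine ⟨η, hD.2.1, fun u hu hGu => ?_⟩
  by_contra hder
  have hGd : Differentiable ℝ G := hG.differentiable one_ne_zero
  have hune : u ≠ ub := by rintro rfl; exact hder hub
  obtain ⟨z, hz, hGz⟩ := ((hGd u).hasDerivAt.eventually_ne hder).exists_mem_uIoo hune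
  obtain ⟨w, hw, hGw, hextr⟩ := exists_isLocalExtr_uIoo_ne hG.continuous.continuousOn hGu rfl hz
    (hGu ▸ hGz)
  have hwu : |w - ub| < η :=
    (abs_sub_left_of_mem_uIcc (uIcc_comm u ub ▸ uIoo_subset_uIcc_self hw)).trans_lt hu
  exact hD.deriv_ne_zero hwu hGw hextr.deriv_eq_zero
end
end

section
/- Let G : ℝ^N → ℝ be differentiable on the open ball B(ū, 2ε) with ∇G Lipschitz continuous on B(ū, 2ε) with Lipschitz constant L₂, and assume that for every u ∈ B(ū, 2ε), G(u) = G(ū) implies ∇G(u) = 0. Define H(u) = |G(u) − G(ū)| for u ∈ B(ū, 2ε). Then H is differentiable on B(ū, 2ε) with ∇H(u) = sign(G(u) − G(ū))·∇G(u), and ∇H is Lipschitz continuous on B(ū, 2ε) with the same Lipschitz constant L₂. -/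
/-!
Where `G u ≠ G ū`, `H` agrees near `u` with `±(G - G ū)`; where `G u = G ū`, the gradient
vanishes, so `G w - G ū = o(‖w - u‖)` and hence `H w = o(‖w - u‖)`. For the Lipschitz bound,
two points `u`, `v` on opposite sides of the level set are joined by a segment that meets it at
some `z`, where `∇G z = 0`; then `‖∇G u‖ + ‖∇G v‖ ≤ L₂ (‖u - z‖ + ‖z - v‖) = L₂ ‖u - v‖`.
-/

open Real Set Metric Filter Topology

noncomputable section

theorem Real.sign_eq_coe_sign (r : ℝ) : Real.sign r = (SignType.sign r : ℝ) := by
  rcases lt_trichotomy r 0 with h | rfl | h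
  · simp [Real.sign_of_neg h, _root_.sign_neg h]
  · simp
  · simp [Real.sign_of_pos h, _root_.sign_pos h]

theorem norm_sign_smul_le {F : Type*} [NormedAddCommGroup F] [NormedSpace ℝ F] (r : ℝ) (v : F) :
    ‖Real.sign r • v‖ ≤ ‖v‖ := by
  rw [norm_smul]
  rcases Real.sign_apply_eq r with h | h | h <;> simp [h]

section Gradient

variable {E : Type*} [NormedAddCommGroup E] [InnerProductSpace ℝ E] [CompleteSpace E]
  {f : E → ℝ} {g u : E}

theorem HasGradientAt.abs_sub_const (c : ℝ) (hf : HasGradientAt f g u)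
    (hcrit : f u = c → g = 0) :
    HasGradientAt (fun w => |f w - c|) (Real.sign (f u - c) • g) u := by
  rcases eq_or_ne (f u - c) 0 with h | h
  · have hfc : f u = c := sub_eq_zero.1 h
    obtain rfl := hcrit hfc
    rw [smul_zero, hasGradientAt_iff_isLittleO]
    rw [hasGradientAt_iff_isLittleO] at hf
    refine hf.norm_left.congr_left fun w => ?_
    simp [hfc, Real.norm_eq_abs]
  · rw [hasGradientAt_iff_hasFDerivAt, map_smul, Real.sign_eq_coe_sign]
    exact (hasGradientAt_iff_hasFDerivAt.1 hf).sub_const c |>.abs h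

end Gradient

section Lipschitz

variable {E F : Type*} [NormedAddCommGroup E] [NormedSpace ℝ E] [NormedAddCommGroup F] {s : Set E} {f : E → ℝ} {g : E → F} {K : NNReal}

theorem LipschitzOnWith.norm_add_norm_le_of_nonpos_of_nonneg (hg : LipschitzOnWith K g s)
    (hs : Convex ℝ s) (hf : ContinuousOn f s) (hzero : ∀ z ∈ s, f z = 0 → g z = 0)
    {x y : E} (hx : x ∈ s) (hy : y ∈ s) (hfx : f x ≤ 0) (hfy : 0 ≤ f y) :
    ‖g x‖ + ‖g y‖ ≤ K * dist x y := by
  have hseg := hs.segment_subset hx hy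
  obtain ⟨z, hz, hfz⟩ : ∃ z ∈ segment ℝ x y, f z = 0 :=
    (convex_segment x y).isPreconnected.intermediate_value (left_mem_segment ℝ x y)
      (right_mem_segment ℝ x y) (hf.mono hseg) ⟨hfx, hfy⟩
  have hgz : g z = 0 := hzero z (hseg hz) hfz
  calc ‖g x‖ + ‖g y‖ = dist (g x) (g z) + dist (g z) (g y) := by
        rw [hgz, dist_zero_right, dist_zero_left]
    _ ≤ K * dist x z + K * dist z y :=
        add_le_add (hg.dist_le_mul x hx z (hseg hz)) (hg.dist_le_mul z (hseg hz) y hy)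
    _ = K * dist x y := by rw [← mul_add, dist_add_dist_of_mem_segment hz]

theorem LipschitzOnWith.sign_smul [NormedSpace ℝ F] (hg : LipschitzOnWith K g s) (hs : Convex ℝ s)
    (hf : ContinuousOn f s) (hzero : ∀ z ∈ s, f z = 0 → g z = 0) :
    LipschitzOnWith K (fun x => Real.sign (f x) • g x) s := by
  have crossing : ∀ x ∈ s, ∀ y ∈ s, f x ≤ 0 → 0 ≤ f y →
      dist (Real.sign (f x) • g x) (Real.sign (f y) • g y) ≤ K * dist x y :=
    fun x hx y hy hfx hfy => calc
      _ ≤ ‖Real.sign (f x) • g x‖ + ‖Real.sign (f y) • g y‖ := dist_le_norm_add_norm _ _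
      _ ≤ ‖g x‖ + ‖g y‖ := add_le_add (norm_sign_smul_le _ _) (norm_sign_smul_le _ _)
      _ ≤ K * dist x y := hg.norm_add_norm_le_of_nonpos_of_nonneg hs hf hzero hx hy hfx hfy
  have sameSign : ∀ x ∈ s, ∀ y ∈ s, Real.sign (f x) = Real.sign (f y) →
      dist (Real.sign (f x) • g x) (Real.sign (f y) • g y) ≤ K * dist x y :=
    fun x hx y hy h => calc
      _ = ‖Real.sign (f x) • (g x - g y)‖ := by rw [dist_eq_norm, h, smul_sub]
      _ ≤ dist (g x) (g y) := (norm_sign_smul_le _ _).trans_eq (dist_eq_norm _ _).symm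
      _ ≤ K * dist x y := hg.dist_le_mul x hx y hy
  refine LipschitzOnWith.of_dist_le_mul fun x hx y hy => ?_
  rcases lt_or_ge (f x) 0 with hfx | hfx <;> rcases lt_or_ge (f y) 0 with hfy | hfy
  · exact sameSign x hx y hy (by rw [Real.sign_of_neg hfx, Real.sign_of_neg hfy])
  · exact crossing x hx y hy hfx.le hfy
  · rw [dist_comm, dist_comm x]; exact crossing y hy x hx hfy.le hfx
  · rcases hfx.eq_or_lt with hfx | hfx
    · exact crossing x hx y hy hfx.ge hfy
    rcases hfy.eq_or_lt with hfy | hfy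
    · rw [dist_comm, dist_comm x]; exact crossing y hy x hx hfy.ge hfx.le
    exact sameSign x hx y hy (by rw [Real.sign_of_pos hfx, Real.sign_of_pos hfy])

end Lipschitz

theorem stmt3_general {N : ℕ} (ub : EuclideanSpace ℝ (Fin N)) (ε : ℝ)
    (G : EuclideanSpace ℝ (Fin N) → ℝ)
    (hdiff : ∀ u ∈ ball ub (2 * ε), DifferentiableAt ℝ G u)
    (L₂ : NNReal) (hLip : LipschitzOnWith L₂ (gradient G) (ball ub (2 * ε)))
    (hcrit : ∀ u ∈ ball ub (2 * ε), G u = G ub → gradient G u = 0) :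
    (∀ u ∈ ball ub (2 * ε),
      HasGradientAt (fun w => |G w - G ub|) (Real.sign (G u - G ub) • gradient G u) u) ∧
    LipschitzOnWith L₂ (fun u => Real.sign (G u - G ub) • gradient G u)
      (ball ub (2 * ε)) := by
  refine ⟨fun u hu => (hdiff u hu).hasGradientAt.abs_sub_const (G ub) (hcrit u hu), ?_⟩
  have hcont : ContinuousOn (fun u => G u - G ub) (ball ub (2 * ε)) :=
    fun u hu => ((hdiff u hu).continuousAt.sub continuousAt_const).continuousWithinAt
  exact hLip.sign_smul (convex_ball ub (2 * ε)) hcont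
    fun u hu h => hcrit u hu (sub_eq_zero.1 h)

theorem stmt3 {N : ℕ} (ub : EuclideanSpace ℝ (Fin N)) (ε : ℝ) (hε : 0 < ε)
    (G : EuclideanSpace ℝ (Fin N) → ℝ)
    (hdiff : ∀ u ∈ ball ub (2 * ε), DifferentiableAt ℝ G u)
    (L₂ : NNReal) (hLip : LipschitzOnWith L₂ (gradient G) (ball ub (2 * ε)))
    (hcrit : ∀ u ∈ ball ub (2 * ε), G u = G ub → gradient G u = 0) :
    (∀ u ∈ ball ub (2 * ε),
      HasGradientAt (fun w => |G w - G ub|) (Real.sign (G u - G ub) • gradient G u) u) ∧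
    LipschitzOnWith L₂ (fun u => Real.sign (G u - G ub) • gradient G u)
      (ball ub (2 * ε)) :=
  stmt3_general ub ε G hdiff L₂ hLip hcrit
end
end

section
/- Let G : ℝ^N → ℝ be differentiable with locally Lipschitz gradient, let ū be a critical point of G (i.e. ∇G(ū) = 0), and suppose there exists ε > 0 such that for every u ∈ B(ū, 2ε), G(u) = G(ū) implies ∇G(u) = 0. Then there exists c > 0 such that |G(u) − G(ū)| ≥ c·‖∇G(u)‖² for all u ∈ B(ū, ε). -/
open Real Set Metric Filter Topology

noncomputable section

open scoped NNReal RealInnerProductSpace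

/-! By compactness `∇G` is `K`-Lipschitz on `B(ū, 2ε)`. For `u ∈ B(ū, ε)` with `G u > G ū`,
follow the steepest-descent segment `u - t ∇G(u)`, `0 ≤ t ≤ 1/(2K)`: it has length at most `ε/2`,
and along it `⟪∇G, ∇G(u)⟫ ≥ ‖∇G(u)‖²/2`. So the segment meets no critical point, hence never
reaches the level `G ū`, while `G` drops by `‖∇G(u)‖²/(4K)` along it. The case `G u < G ū` is the
same argument for `-G`. -/

section GradientDescent

variable {F : Type*} [NormedAddCommGroup F] [InnerProductSpace ℝ F]

theorem LipschitzOnWith.inner_apply_sub_smul_ge {f : F → F} {K : ℝ≥0} {s : Set F}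
    (hf : LipschitzOnWith K f s) {x : F} (hx : x ∈ s) {t : ℝ} (ht : 0 ≤ t)
    (hxt : x - t • f x ∈ s) : (1 - K * t) * ‖f x‖ ^ 2 ≤ ⟪f (x - t • f x), f x⟫ := by
  set y := x - t • f x
  have hdist : ‖f y - f x‖ ≤ K * t * ‖f x‖ := by
    calc ‖f y - f x‖ ≤ K * ‖y - x‖ := by
          simpa only [dist_eq_norm] using hf.dist_le_mul y hxt x hx
      _ = K * t * ‖f x‖ := by
          simp only [y, sub_sub_cancel_left, norm_neg, norm_smul, Real.norm_eq_abs,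
            abs_of_nonneg ht, mul_assoc]
  have hcs : -(‖f y - f x‖ * ‖f x‖) ≤ ⟪f y - f x, f x⟫ :=
    neg_le_of_abs_le (abs_real_inner_le_norm _ _)
  have hsplit : ⟪f y, f x⟫ = ‖f x‖ ^ 2 + ⟪f y - f x, f x⟫ := by
    rw [inner_sub_left, real_inner_self_eq_norm_sq]; ring
  nlinarith [norm_nonneg (f x)]

variable [CompleteSpace F]

theorem gradient_neg (G : F → ℝ) (x : F) : gradient (-G) x = -gradient G x := by
  rw [gradient, gradient, fderiv_neg, map_neg]

theorem hasDerivAt_comp_sub_smul {G : F → ℝ} {x d : F} {t : ℝ}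
    (hG : DifferentiableAt ℝ G (x - t • d)) :
    HasDerivAt (fun s : ℝ => G (x - s • d)) (-⟪gradient G (x - t • d), d⟫) t := by
  have hline : HasDerivAt (fun s : ℝ => x - s • d) (-d) t := by
    simpa using ((hasDerivAt_id t).smul_const d).const_sub x
  have := hG.hasGradientAt.hasFDerivAt.comp_hasDerivAt t hline
  rwa [InnerProductSpace.toDual_apply_apply, inner_neg_right] at this

theorem sub_le_of_lipschitzOnWith_gradient {G : F → ℝ} (hG : Differentiable ℝ G) {K : ℝ≥0}
    {s : Set F} (hK : LipschitzOnWith K (gradient G) s) {x : F} (hx : x ∈ s) {T : ℝ}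
    (hT : 0 ≤ T) (hseg : ∀ t ∈ Icc 0 T, x - t • gradient G x ∈ s) :
    G (x - T • gradient G x) ≤ G x - (1 - K * T) * T * ‖gradient G x‖ ^ 2 := by
  set g := gradient G x
  have hderiv (t : ℝ) := hasDerivAt_comp_sub_smul (d := g) (hG (x - t • g))
  have hdiff : Differentiable ℝ fun t : ℝ => G (x - t • g) :=
    fun t => (hderiv t).differentiableAt
  have hslope : ∀ t ∈ interior (Icc 0 T),
      deriv (fun t : ℝ => G (x - t • g)) t ≤ -((1 - K * T) * ‖g‖ ^ 2) := by
    intro t ht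
    rw [interior_Icc] at ht
    rw [(hderiv t).deriv, neg_le_neg_iff]
    calc (1 - K * T) * ‖g‖ ^ 2 ≤ (1 - K * t) * ‖g‖ ^ 2 := by
          gcongr; exact ht.2.le
      _ ≤ ⟪gradient G (x - t • g), g⟫ :=
          hK.inner_apply_sub_smul_ge hx ht.1.le (hseg t (Ioo_subset_Icc_self ht))
  have := (convex_Icc 0 T).image_sub_le_mul_sub_of_deriv_le hdiff.continuous.continuousOn
    hdiff.differentiableOn hslope 0 (left_mem_Icc.2 hT) T (right_mem_Icc.2 hT) hT
  simp only [zero_smul, sub_zero] at this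
  linarith

theorem one_div_mul_norm_gradient_sq_le_sub {G : F → ℝ} (hG : Differentiable ℝ G) {ub u : F}
    {ε : ℝ} {K : ℝ≥0} (hK₀ : 0 < K) (hK : LipschitzOnWith K (gradient G) (ball ub (2 * ε)))
    (hcrit : ∀ v ∈ ball ub (2 * ε), G v = G ub → gradient G v = 0)
    (hu : u ∈ ball ub ε) (hgt : G ub < G u) :
    1 / (4 * K) * ‖gradient G u‖ ^ 2 ≤ G u - G ub := by
  set g := gradient G u
  rcases eq_or_ne g 0 with hg | hg
  · simp only [hg, norm_zero]; linarith
  have hε : 0 < ε := pos_of_mem_ball hu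
  have hu2 : u ∈ ball ub (2 * ε) := ball_subset_ball (by linarith) hu
  have hub : gradient G ub = 0 := hcrit ub (mem_ball_self (by linarith)) rfl
  have hgε : ‖g‖ ≤ K * ε := by
    have := hK.dist_le_mul u hu2 ub (mem_ball_self (by linarith))
    rw [hub, dist_zero_right] at this
    nlinarith [mem_ball.1 hu, K.2]
  set T : ℝ := 1 / (2 * K)
  have hT : 0 < T := by positivity
  have hKT : (K : ℝ) * T = 1 / 2 := by simp only [T]; field_simp
  have hseg : ∀ t ∈ Icc 0 T, u - t • g ∈ ball ub (2 * ε) := by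
    intro t ht
    have hstep : t * ‖g‖ ≤ ε / 2 := by
      calc t * ‖g‖ ≤ T * (K * ε) := by gcongr; exact ht.2
        _ = ε / 2 := by rw [← mul_assoc, mul_comm T, hKT]; ring
    rw [mem_ball]
    calc dist (u - t • g) ub ≤ dist (u - t • g) u + dist u ub := dist_triangle _ _ _
      _ = t * ‖g‖ + dist u ub := by
          rw [dist_eq_norm, sub_sub_cancel_left, norm_neg, norm_smul, Real.norm_of_nonneg ht.1]
      _ < 2 * ε := by linarith [mem_ball.1 hu]
  have hnonzero : ∀ t ∈ Icc 0 T, G (u - t • g) ≠ G ub := by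
    intro t ht heq
    have hinner := hK.inner_apply_sub_smul_ge hu2 ht.1 (hseg t ht)
    rw [hcrit _ (hseg t ht) heq, inner_zero_left] at hinner
    have : K * t ≤ 1 / 2 := by
      calc (K : ℝ) * t ≤ K * T := by gcongr; exact ht.2
        _ = 1 / 2 := hKT
    nlinarith [norm_pos_iff.2 hg]
  have habove : G ub < G (u - T • g) := by
    by_contra! hle
    have hcont : ContinuousOn (fun t : ℝ => G (u - t • g)) (Icc 0 T) :=
      (hG.continuous.comp (by fun_prop)).continuousOn
    obtain ⟨t, ht, heq⟩ := intermediate_value_Icc' hT.le hcont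
      ⟨hle, by simpa using hgt.le⟩
    exact hnonzero t ht heq
  have hdrop := sub_le_of_lipschitzOnWith_gradient hG hK hu2 hT.le hseg
  have hT' : (1 - K * T) * T = 1 / (4 * K) := by rw [hKT]; simp only [T]; field_simp; ring
  rw [hT'] at hdrop
  linarith

theorem one_div_mul_norm_gradient_sq_le_abs_sub {G : F → ℝ} (hG : Differentiable ℝ G) {ub u : F}
    {ε : ℝ} {K : ℝ≥0} (hK₀ : 0 < K) (hK : LipschitzOnWith K (gradient G) (ball ub (2 * ε)))
    (hcrit : ∀ v ∈ ball ub (2 * ε), G v = G ub → gradient G v = 0) (hu : u ∈ ball ub ε) :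
    1 / (4 * K) * ‖gradient G u‖ ^ 2 ≤ |G u - G ub| := by
  rcases lt_trichotomy (G u) (G ub) with hlt | heq | hgt
  · have hnegK : LipschitzOnWith K (gradient (-G)) (ball ub (2 * ε)) := by
      intro x hx y hy
      simpa only [gradient_neg, edist_neg_neg] using hK hx hy
    have hnegcrit : ∀ v ∈ ball ub (2 * ε), (-G) v = (-G) ub → gradient (-G) v = 0 := by
      intro v hv heq
      rw [gradient_neg, hcrit v hv (neg_inj.1 heq), neg_zero]
    have := one_div_mul_norm_gradient_sq_le_sub hG.neg hK₀ hnegK hnegcrit hu (neg_lt_neg hlt)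
    rw [gradient_neg, norm_neg, Pi.neg_apply, Pi.neg_apply] at this
    rw [abs_of_neg (sub_neg.2 hlt)]
    linarith
  · have hu2 : u ∈ ball ub (2 * ε) := ball_subset_ball (by linarith [pos_of_mem_ball hu]) hu
    simp [hcrit u hu2 heq]
  · exact (one_div_mul_norm_gradient_sq_le_sub hG hK₀ hK hcrit hu hgt).trans (le_abs_self _)

end GradientDescent

theorem stmt4_general {N : ℕ} (G : EuclideanSpace ℝ (Fin N) → ℝ)
    (hdiff : Differentiable ℝ G) (hLip : LocallyLipschitz (gradient G))
    (ub : EuclideanSpace ℝ (Fin N))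
    (ε : ℝ)
    (hcrit : ∀ u ∈ ball ub (2 * ε), G u = G ub → gradient G u = 0) :
    ∃ c > 0, ∀ u ∈ ball ub ε, c * ‖gradient G u‖ ^ 2 ≤ |G u - G ub| := by
  obtain ⟨K, hK⟩ := hLip.locallyLipschitzOn.exists_lipschitzOnWith_of_compact
    (isCompact_closedBall ub (2 * ε))
  have hK' : LipschitzOnWith (K + 1) (gradient G) (ball ub (2 * ε)) :=
    (hK.weaken le_self_add).mono ball_subset_closedBall
  exact ⟨1 / (4 * (K + 1 : ℝ≥0)), by positivity, fun u hu =>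
    one_div_mul_norm_gradient_sq_le_abs_sub hdiff (by positivity) hK' hcrit hu⟩

theorem stmt4 {N : ℕ} (G : EuclideanSpace ℝ (Fin N) → ℝ)
    (hdiff : Differentiable ℝ G) (hLip : LocallyLipschitz (gradient G))
    (ub : EuclideanSpace ℝ (Fin N)) (hub : gradient G ub = 0)
    (ε : ℝ) (hε : 0 < ε)
    (hcrit : ∀ u ∈ ball ub (2 * ε), G u = G ub → gradient G u = 0) :
    ∃ c > 0, ∀ u ∈ ball ub ε, c * ‖gradient G u‖ ^ 2 ≤ |G u - G ub| :=
  stmt4_general G hdiff hLip ub ε hcrit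
end
end

section
/- Let G : ℝ^N → ℝ be twice continuously differentiable, r₀ > 0, and let u : (0, r₀) → ℝ^N be a C¹ curve with G(u(r)) = r for all r ∈ (0, r₀). Let λ : (0, r₀) → ℝ be continuous and λ̄ ≥ 0 be such that ∇²G(u(r))·∇G(u(r)) = λ(r)·∇G(u(r)) and λ(r) ≤ λ̄ for all r ∈ (0, r₀). Assume moreover there is a sequence rₙ ↓ 0 in (0, r₀) with ‖∇G(u(rₙ))‖ → 0. Then ‖∇G(u(r))‖² ≤ 2λ̄·r for all r ∈ (0, r₀). -/
/-!
Put `φ(r) = ‖∇G(u r)‖²`. Differentiating `G(u r) = r` gives `⟪∇G(u r), u' r⟫ = 1`, so by the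
symmetry of the Hessian and the eigenvector relation
`φ'(r) = 2⟪∇²G(u r) u' r, ∇G(u r)⟫ = 2⟪u' r, λ(r) ∇G(u r)⟫ = 2λ(r) ≤ 2λ̄`.
The mean value inequality on `[rₙ, r]` gives `φ(r) ≤ φ(rₙ) + 2λ̄(r - rₙ)`, and `n → ∞` concludes.
-/

open Set Filter Topology InnerProductSpace RealInnerProductSpace

section GradientCalculus

variable {E : Type*} [NormedAddCommGroup E] [InnerProductSpace ℝ E] [CompleteSpace E]
  {G : E → ℝ} {x : E}

theorem hasFDerivAt_gradient (h : DifferentiableAt ℝ (fderiv ℝ G) x) :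
    HasFDerivAt (gradient G)
      ((toDual ℝ E).symm.toContinuousLinearEquiv.toContinuousLinearMap ∘L
        fderiv ℝ (fderiv ℝ G) x) x :=
  (toDual ℝ E).symm.toContinuousLinearEquiv.hasFDerivAt.comp x h.hasFDerivAt

theorem inner_fderiv_gradient_apply (h : DifferentiableAt ℝ (fderiv ℝ G) x) (v w : E) :
    ⟪fderiv ℝ (gradient G) x v, w⟫ = fderiv ℝ (fderiv ℝ G) x v w := by
  rw [(hasFDerivAt_gradient h).fderiv]
  exact toDual_symm_apply

-- Schwarz's theorem for `fderiv (fderiv G)`, transported through the Riesz isomorphism.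
theorem inner_fderiv_gradient_comm (hG : ContDiffAt ℝ 2 G x) (v w : E) :
    ⟪fderiv ℝ (gradient G) x v, w⟫ = ⟪fderiv ℝ (gradient G) x w, v⟫ := by
  have hdiff : DifferentiableAt ℝ (fderiv ℝ G) x :=
    (hG.fderiv_right le_rfl).differentiableAt one_ne_zero
  rw [inner_fderiv_gradient_apply hdiff, inner_fderiv_gradient_apply hdiff]
  exact hG.isSymmSndFDerivAt (by simp [minSmoothness_of_isRCLikeNormedField]) v w

theorem HasDerivAt.norm_sq_gradient_comp {u : ℝ → E} {u' : E} {r : ℝ}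
    (hG : ContDiffAt ℝ 2 G (u r)) (hu : HasDerivAt u u' r) :
    HasDerivAt (fun s => ‖gradient G (u s)‖ ^ 2)
      (2 * ⟪fderiv ℝ (gradient G) (u r) (gradient G (u r)), u'⟫) r := by
  have hdiff : DifferentiableAt ℝ (fderiv ℝ G) (u r) :=
    (hG.fderiv_right le_rfl).differentiableAt one_ne_zero
  have hgrad := (hasFDerivAt_gradient hdiff).comp_hasDerivAt r hu
  rw [← (hasFDerivAt_gradient hdiff).fderiv] at hgrad
  convert hgrad.norm_sq using 2
  · rfl
  · exact (inner_fderiv_gradient_comm hG _ _).trans (real_inner_comm _ _)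

theorem inner_gradient_eq_one_of_eventually_comp_eq {u : ℝ → E} {u' : E} {r : ℝ}
    (hG : DifferentiableAt ℝ G (u r)) (hu : HasDerivAt u u' r)
    (hval : ∀ᶠ s in 𝓝 r, G (u s) = s) :
    ⟪gradient G (u r), u'⟫ = 1 := by
  have hcomp : HasDerivAt (fun s => G (u s)) ⟪gradient G (u r), u'⟫ r :=
    hG.hasGradientAt.hasFDerivAt.comp_hasDerivAt r hu
  exact hcomp.unique ((hasDerivAt_id r).congr_of_eventuallyEq hval)

end GradientCalculus

theorem le_add_mul_sub_of_hasDerivAt_le {f f' : ℝ → ℝ} {a b C y : ℝ}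
    (hf : ∀ s ∈ Ioo a b, HasDerivAt f (f' s) s) (hf' : ∀ s ∈ Ioo a b, f' s ≤ C)
    {rn : ℕ → ℝ} (hrn : ∀ n, rn n ∈ Ioo a b) (hrn_lim : Tendsto rn atTop (𝓝 a))
    (hf_lim : Tendsto (fun n => f (rn n)) atTop (𝓝 y)) :
    ∀ r ∈ Ioo a b, f r ≤ y + C * (r - a) := by
  intro r hr
  have hincr : ∀ n, rn n ≤ r → f r - f (rn n) ≤ C * (r - rn n) := fun n => by
    refine (convex_Ioo a b).image_sub_le_mul_sub_of_deriv_le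
      (fun s hs => (hf s hs).continuousAt.continuousWithinAt) ?_ ?_ _ (hrn _) r hr
    · rw [interior_Ioo]
      exact fun s hs => (hf s hs).differentiableAt.differentiableWithinAt
    · rw [interior_Ioo]
      exact fun s hs => (hf s hs).deriv ▸ hf' s hs
  have hbound : ∀ᶠ n in atTop, f r ≤ f (rn n) + C * (r - rn n) := by
    filter_upwards [hrn_lim.eventually_lt_const hr.1] with n hn
    linarith [hincr n hn.le]
  refine ge_of_tendsto ?_ hbound
  simpa using hf_lim.add ((tendsto_const_nhds.sub hrn_lim).const_mul C)

theorem stmt6_general {N : ℕ} (G : EuclideanSpace ℝ (Fin N) → ℝ) (hG : ContDiff ℝ 2 G)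
    (r₀ : ℝ)
    (u u' : ℝ → EuclideanSpace ℝ (Fin N))
    (hu : ∀ r ∈ Ioo (0:ℝ) r₀, HasDerivAt u (u' r) r)
    (hval : ∀ r ∈ Ioo (0:ℝ) r₀, G (u r) = r)
    (lam : ℝ → ℝ)
    (lamb : ℝ)
    (heig : ∀ r ∈ Ioo (0:ℝ) r₀,
      fderiv ℝ (gradient G) (u r) (gradient G (u r)) = lam r • gradient G (u r))
    (hlamle : ∀ r ∈ Ioo (0:ℝ) r₀, lam r ≤ lamb)
    (rn : ℕ → ℝ) (hrnmem : ∀ n, rn n ∈ Ioo (0:ℝ) r₀)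
    (hrn0 : Tendsto rn atTop (𝓝 0))
    (hgrad0 : Tendsto (fun n => ‖gradient G (u (rn n))‖) atTop (𝓝 0)) :
    ∀ r ∈ Ioo (0:ℝ) r₀, ‖gradient G (u r)‖ ^ 2 ≤ 2 * lamb * r := by
  have hderiv : ∀ r ∈ Ioo (0:ℝ) r₀,
      HasDerivAt (fun s => ‖gradient G (u s)‖ ^ 2) (2 * lam r) r := by
    intro r hr
    have hnormal : ⟪gradient G (u r), u' r⟫ = 1 :=
      inner_gradient_eq_one_of_eventually_comp_eq (hG.differentiable two_ne_zero _) (hu r hr)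
        (eventually_of_mem (Ioo_mem_nhds hr.1 hr.2) hval)
    simpa [heig r hr, real_inner_smul_left, hnormal] using
      (hu r hr).norm_sq_gradient_comp hG.contDiffAt
  have hgrad_sq : Tendsto (fun n => ‖gradient G (u (rn n))‖ ^ 2) atTop (𝓝 0) := by
    simpa using hgrad0.pow 2
  intro r hr
  simpa only [zero_add, sub_zero] using le_add_mul_sub_of_hasDerivAt_le hderiv
    (fun s hs => mul_le_mul_of_nonneg_left (hlamle s hs) zero_le_two) hrnmem hrn0 hgrad_sq r hr

theorem stmt6 {N : ℕ} (G : EuclideanSpace ℝ (Fin N) → ℝ) (hG : ContDiff ℝ 2 G)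
    (r₀ : ℝ) (hr₀ : 0 < r₀)
    (u u' : ℝ → EuclideanSpace ℝ (Fin N))
    (hu : ∀ r ∈ Ioo (0:ℝ) r₀, HasDerivAt u (u' r) r)
    (hu'c : ContinuousOn u' (Ioo 0 r₀))
    (hval : ∀ r ∈ Ioo (0:ℝ) r₀, G (u r) = r)
    (lam : ℝ → ℝ) (hlamc : ContinuousOn lam (Ioo 0 r₀))
    (lamb : ℝ) (hlamb : 0 ≤ lamb)
    (heig : ∀ r ∈ Ioo (0:ℝ) r₀,
      fderiv ℝ (gradient G) (u r) (gradient G (u r)) = lam r • gradient G (u r))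
    (hlamle : ∀ r ∈ Ioo (0:ℝ) r₀, lam r ≤ lamb)
    (rn : ℕ → ℝ) (hrnmem : ∀ n, rn n ∈ Ioo (0:ℝ) r₀) (hrnanti : Antitone rn)
    (hrn0 : Tendsto rn atTop (𝓝 0))
    (hgrad0 : Tendsto (fun n => ‖gradient G (u (rn n))‖) atTop (𝓝 0)) :
    ∀ r ∈ Ioo (0:ℝ) r₀, ‖gradient G (u r)‖ ^ 2 ≤ 2 * lamb * r :=
  stmt6_general G hG r₀ u u' hu hval lam lamb heig hlamle rn hrnmem hrn0 hgrad0
end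

section
/- Let F : ℝ^N → ℝ^N be locally Lipschitz and let E : ℝ^N → ℝ be continuously differentiable. Assume F is quasi-gradient for E on all of ℝ^N with angle constant α > 0, and that E has the KL property at every point of ℝ^N. Let u : [0, ∞) → ℝ^N solve u′(t) + F(u(t)) = 0 with u(0) = u₀. Then either ‖u(t)‖ → +∞ as t → +∞, or u(t) converges as t → +∞ to some point u∞ with F(u∞) = 0. Moreover, in the convergent case, u′ is integrable on (0, ∞), u′(t) → 0 as t → ∞, and for every desingularizing function φ of E at u∞ one has ‖u(t) − u∞‖ ≤ (1/α)·φ(E(u(t)) − E(u∞)) for all sufficiently large t. -/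
open Real Set Metric Filter Topology MeasureTheory RealInnerProductSpace

noncomputable section

/-- `φ` is a desingularizing function of `E` at `ub` on `B(ub, η)`, with domain `[0, r₀)`. -/
def DesingOn {N : ℕ} (E : EuclideanSpace ℝ (Fin N) → ℝ) (ub : EuclideanSpace ℝ (Fin N))
    (η r₀ : ℝ) (φ : ℝ → ℝ) : Prop :=
  0 < r₀ ∧ 0 < η ∧ φ 0 = 0 ∧ (∀ s ∈ Set.Ico (0:ℝ) r₀, 0 ≤ φ s) ∧
  ContinuousOn φ (Set.Ico 0 r₀) ∧
  (∀ s ∈ Set.Ioo (0:ℝ) r₀, DifferentiableAt ℝ φ s) ∧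
  ContinuousOn (deriv φ) (Set.Ioo 0 r₀) ∧
  (∀ s ∈ Set.Ioo (0:ℝ) r₀, 0 < deriv φ s) ∧
  (∀ u ∈ Metric.ball ub η, |E u - E ub| < r₀) ∧
  (∀ u ∈ Metric.ball ub η, E u ≠ E ub →
    1 ≤ deriv φ (|E u - E ub|) * ‖gradient E u‖)

/-- `E` has the KL property at `ub`. -/
def KLAt {N : ℕ} (E : EuclideanSpace ℝ (Fin N) → ℝ) (ub : EuclideanSpace ℝ (Fin N)) : Prop :=
  ∃ η r₀ φ, DesingOn E ub η r₀ φ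

/-!
Along the flow, `t ↦ E (u t)` is nonincreasing by the angle condition. If `‖u t‖ ↛ ∞`, the
trajectory has a cluster point `ū` and `E (u t)` decreases to `E ū`. As long as `u` stays in the
KL ball around `ū`, the angle and KL inequalities give `α ‖u'‖ ≤ -(φ (E ∘ u - E ū))'`, so the
length of the path after time `t` is at most `φ (E (u t) - E ū) / α`. Since this tends to `0`, a
trajectory passing close enough to `ū` can never leave the ball: it has finite length and
converges to `ū`, and integrability of `u' = -F (u t)` forces `F ū = 0`.
-/

theorem exists_mapClusterPt_of_not_tendsto_norm_atTop {ι H : Type*} [NormedAddCommGroup H]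
    [ProperSpace H] {l : Filter ι} {u : ι → H} (h : ¬Tendsto (fun i => ‖u i‖) l atTop) :
    ∃ x, MapClusterPt x l u := by
  obtain ⟨R, hR⟩ : ∃ R, ∃ᶠ i in l, u i ∈ closedBall 0 R := by
    simp only [Filter.tendsto_atTop, not_forall, Filter.not_eventually, not_le] at h
    obtain ⟨R, hR⟩ := h
    exact ⟨R, hR.mono fun i hi => mem_closedBall_zero_iff.2 hi.le⟩
  obtain ⟨x, -, hx⟩ := (isCompact_closedBall 0 R).exists_mapClusterPt_of_frequently hR
  exact ⟨x, hx⟩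

theorem AntitoneOn.le_of_mapClusterPt {f : ℝ → ℝ} {a l : ℝ} (hf : AntitoneOn f (Ici a))
    (hl : MapClusterPt l atTop f) {t : ℝ} (ht : a ≤ t) : l ≤ f t := by
  have := hl.mem_closure_of_mem (s := Iic (f t)) <| mem_map.2 <|
    mem_of_superset (Ici_mem_atTop t) fun τ hτ => hf ht (ht.trans hτ) hτ
  rwa [closure_Iic] at this

theorem AntitoneOn.tendsto_of_mapClusterPt {f : ℝ → ℝ} {a l : ℝ} (hf : AntitoneOn f (Ici a))
    (hl : MapClusterPt l atTop f) : Tendsto f atTop (𝓝 l) := by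
  refine tendsto_order.2 ⟨fun y hy => ?_, fun y hy => ?_⟩
  · filter_upwards [eventually_ge_atTop a] with τ hτ
    exact hy.trans_le (hf.le_of_mapClusterPt hl hτ)
  · obtain ⟨τ₀, hτ₀, hτ₀a⟩ := ((mapClusterPt_iff_frequently.1 hl _ (Iio_mem_nhds hy)).and_eventually
      (eventually_ge_atTop a)).exists
    filter_upwards [eventually_ge_atTop τ₀] with τ hτ
    exact (hf hτ₀a (hτ₀a.trans hτ) hτ).trans_lt hτ₀

theorem ContinuousOn.forall_lt_of_barrier {f : ℝ → ℝ} {a c : ℝ} (hf : ContinuousOn f (Ici a))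
    (ha : f a < c) (h : ∀ τ ≥ a, (∀ z ∈ Icc a τ, f z ≤ c) → f τ < c) : ∀ τ ≥ a, f τ < c := by
  intro τ₀ hτ₀
  by_contra! hτ₀c
  set S := Icc a τ₀ ∩ f ⁻¹' Ici c
  have hSbdd : BddBelow S := ⟨a, fun x hx => hx.1.1⟩
  have hSclosed : IsClosed S :=
    (hf.mono Icc_subset_Ici_self).preimage_isClosed_of_isClosed isClosed_Icc isClosed_Ici
  have hm : sInf S ∈ S := hSclosed.csInf_mem ⟨τ₀, ⟨hτ₀, le_rfl⟩, hτ₀c⟩ hSbdd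
  set m := sInf S
  have ham : a < m := hm.1.1.lt_of_ne fun h => ha.not_ge (by rw [h]; exact hm.2)
  have hbelow : ∀ z ∈ closure (Ico a m), f z ≤ c := by
    refine le_on_closure (fun z hz => ?_) (hf.mono ?_) continuousOn_const
    · by_contra! hcz
      exact hz.2.not_ge (csInf_le hSbdd ⟨⟨hz.1, hz.2.le.trans hm.1.2⟩, hcz.le⟩)
    · rw [closure_Ico ham.ne]
      exact Icc_subset_Ici_self
  rw [closure_Ico ham.ne] at hbelow
  exact (h m hm.1.1 hbelow).not_ge hm.2

theorem eq_zero_of_integrableOn_Ioi_of_tendsto {E : Type*} [NormedAddCommGroup E] {f : ℝ → E}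
    {a : ℝ} {c : E} (hf : IntegrableOn f (Ioi a)) (hc : Tendsto f atTop (𝓝 c)) : c = 0 := by
  by_contra hne
  have hpos : 0 < ‖c‖ / 2 := half_pos (norm_pos_iff.2 hne)
  obtain ⟨T, hT⟩ := eventually_atTop.1 ((eventually_ge_atTop a).and
    (hc.norm.eventually_const_lt (half_lt_self (norm_pos_iff.2 hne))))
  have hconst : IntegrableOn (fun _ => ‖c‖ / 2) (Ioi T) := by
    refine (hf.mono_set (Ioi_subset_Ioi (hT T le_rfl).1)).norm.mono' aestronglyMeasurable_const ?_
    filter_upwards [ae_restrict_mem measurableSet_Ioi] with t ht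
    rw [Real.norm_of_nonneg hpos.le]
    exact (hT t (le_of_lt ht)).2.le
  simp [hpos.ne'] at hconst

section Flow

variable {H : Type*} [NormedAddCommGroup H] [NormedSpace ℝ H] {F : H → H} {u : ℝ → H}

theorem continuousOn_Ici_of_hasDerivAt (hode : ∀ t ≥ (0:ℝ), HasDerivAt u (-(F (u t))) t) :
    ContinuousOn u (Ici 0) :=
  fun t ht => (hode t ht).continuousAt.continuousWithinAt

theorem norm_sub_le_integral_norm [CompleteSpace H] (hF : Continuous F)
    (hode : ∀ t ≥ (0:ℝ), HasDerivAt u (-(F (u t))) t) {a b : ℝ} (ha : 0 ≤ a) (hab : a ≤ b) :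
    ‖u b - u a‖ ≤ ∫ s in a..b, ‖F (u s)‖ := by
  have hcont : ContinuousOn (fun s => -(F (u s))) (uIcc a b) := by
    rw [uIcc_of_le hab]
    exact (hF.comp_continuousOn ((continuousOn_Ici_of_hasDerivAt hode).mono
      fun s hs => ha.trans hs.1)).neg
  have hftc : ∫ s in a..b, -(F (u s)) = u b - u a :=
    intervalIntegral.integral_eq_sub_of_hasDerivAt
      (fun s hs => hode s (ha.trans (by rw [uIcc_of_le hab] at hs; exact hs.1)))
      hcont.intervalIntegrable
  calc ‖u b - u a‖ = ‖∫ s in a..b, -(F (u s))‖ := by rw [hftc]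
    _ ≤ ∫ s in a..b, ‖-(F (u s))‖ := intervalIntegral.norm_integral_le_integral_norm hab
    _ = ∫ s in a..b, ‖F (u s)‖ := by simp only [norm_neg]

theorem integrableOn_Ioi_zero_of_integrableOn_Ioi (hF : Continuous F)
    (hode : ∀ t ≥ (0:ℝ), HasDerivAt u (-(F (u t))) t) {t : ℝ} (ht : 0 ≤ t)
    (h : IntegrableOn (fun s => F (u s)) (Ioi t)) : IntegrableOn (fun s => F (u s)) (Ioi 0) := by
  rw [← Ioc_union_Ioi_eq_Ioi ht]
  exact ((hF.comp_continuousOn ((continuousOn_Ici_of_hasDerivAt hode).mono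
    Icc_subset_Ici_self)).integrableOn_Icc.mono_set Ioc_subset_Icc_self).union h

end Flow

structure IsQuasiGradient {H : Type*} [NormedAddCommGroup H] [InnerProductSpace ℝ H]
    [CompleteSpace H] (F : H → H) (E : H → ℝ) (α : ℝ) : Prop where
  pos : 0 < α
  angle : ∀ u, α * (‖gradient E u‖ * ‖F u‖) ≤ ⟪gradient E u, F u⟫
  rest : ∀ u, gradient E u = 0 ↔ F u = 0

section QuasiGradient

variable {H : Type*} [NormedAddCommGroup H] [InnerProductSpace ℝ H] [CompleteSpace H]
  {F : H → H} {E : H → ℝ} {α : ℝ} {u : ℝ → H}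

namespace IsQuasiGradient

theorem inner_nonneg (hqg : IsQuasiGradient F E α) (x : H) : 0 ≤ ⟪gradient E x, F x⟫ :=
  le_trans (mul_nonneg hqg.pos.le (by positivity)) (hqg.angle x)

theorem eq_zero_of_inner_eq_zero (hqg : IsQuasiGradient F E α) {x : H}
    (hx : ⟪gradient E x, F x⟫ = 0) : F x = 0 := by
  have h := hqg.angle x
  rw [hx] at h
  have : ‖gradient E x‖ * ‖F x‖ = 0 :=
    le_antisymm (nonpos_of_mul_nonpos_right h hqg.pos) (by positivity)
  rcases mul_eq_zero.1 this with h | h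
  · exact (hqg.rest x).1 (norm_eq_zero.1 h)
  · exact norm_eq_zero.1 h

end IsQuasiGradient

theorem hasDerivAt_energy (hE : Differentiable ℝ E)
    (hode : ∀ t ≥ (0:ℝ), HasDerivAt u (-(F (u t))) t) {t : ℝ} (ht : 0 ≤ t) :
    HasDerivAt (fun s => E (u s)) (-⟪gradient E (u t), F (u t)⟫) t := by
  have h := (hasGradientAt_iff_hasFDerivAt.1 (hE (u t)).hasGradientAt).comp_hasDerivAt t
    (hode t ht)
  simp only [InnerProductSpace.toDual_apply_apply, map_neg] at h
  exact h

theorem antitoneOn_energy (hqg : IsQuasiGradient F E α) (hE : Differentiable ℝ E)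
    (hode : ∀ t ≥ (0:ℝ), HasDerivAt u (-(F (u t))) t) :
    AntitoneOn (fun t => E (u t)) (Ici 0) := by
  refine antitoneOn_of_deriv_nonpos (convex_Ici 0)
    (hE.continuous.comp_continuousOn (continuousOn_Ici_of_hasDerivAt hode)) ?_ ?_ <;>
    intro t ht <;> rw [interior_Ici] at ht
  · exact (hasDerivAt_energy hE hode ht.le).differentiableAt.differentiableWithinAt
  · rw [(hasDerivAt_energy hE hode ht.le).deriv, neg_nonpos]
    exact hqg.inner_nonneg _

theorem le_energy_of_mapClusterPt (hqg : IsQuasiGradient F E α) (hE : Differentiable ℝ E)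
    (hode : ∀ t ≥ (0:ℝ), HasDerivAt u (-(F (u t))) t) {x : H} (hx : MapClusterPt x atTop u)
    {t : ℝ} (ht : 0 ≤ t) : E x ≤ E (u t) :=
  (antitoneOn_energy hqg hE hode).le_of_mapClusterPt (hx.tendsto_comp (hE.continuous.tendsto x)) ht

theorem tendsto_energy_of_mapClusterPt (hqg : IsQuasiGradient F E α) (hE : Differentiable ℝ E)
    (hode : ∀ t ≥ (0:ℝ), HasDerivAt u (-(F (u t))) t) {x : H} (hx : MapClusterPt x atTop u) :
    Tendsto (fun t => E (u t)) atTop (𝓝 (E x)) :=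
  (antitoneOn_energy hqg hE hode).tendsto_of_mapClusterPt
    (hx.tendsto_comp (hE.continuous.tendsto x))

end QuasiGradient

section KL

variable {N : ℕ} {F : EuclideanSpace ℝ (Fin N) → EuclideanSpace ℝ (Fin N)}
  {E : EuclideanSpace ℝ (Fin N) → ℝ} {α : ℝ} {u : ℝ → EuclideanSpace ℝ (Fin N)}
  {ub : EuclideanSpace ℝ (Fin N)} {η r₀ : ℝ} {φ : ℝ → ℝ}

namespace DesingOn

theorem radius_pos (hφ : DesingOn E ub η r₀ φ) : 0 < η := hφ.2.1

theorem sub_mem_Ico (hφ : DesingOn E ub η r₀ φ) {x : EuclideanSpace ℝ (Fin N)}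
    (hx : x ∈ ball ub η) (hle : E ub ≤ E x) : E x - E ub ∈ Ico 0 r₀ := by
  obtain ⟨-, -, -, -, -, -, -, -, hlt, -⟩ := hφ
  exact ⟨sub_nonneg.2 hle, (le_abs_self _).trans_lt (hlt x hx)⟩

theorem apply_sub_nonneg (hφ : DesingOn E ub η r₀ φ) {x : EuclideanSpace ℝ (Fin N)}
    (hx : x ∈ ball ub η) (hle : E ub ≤ E x) : 0 ≤ φ (E x - E ub) :=
  hφ.2.2.2.1 _ (hφ.sub_mem_Ico hx hle)

theorem tendsto_zero {ι : Type*} {l : Filter ι} {g : ι → ℝ} (hφ : DesingOn E ub η r₀ φ)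
    (hg : Tendsto g l (𝓝 0)) (hg0 : ∀ᶠ i in l, 0 ≤ g i) : Tendsto (fun i => φ (g i)) l (𝓝 0) := by
  obtain ⟨hr₀, -, hφ0, -, hφcont, -⟩ := hφ
  have hgIco : Tendsto g l (𝓝[Ico 0 r₀] 0) := tendsto_nhdsWithin_iff.2
    ⟨hg, by filter_upwards [hg0, hg.eventually_lt_const hr₀] with i h0 hr using ⟨h0, hr⟩⟩
  have h := (hφcont 0 ⟨le_rfl, hr₀⟩).tendsto.comp hgIco
  rw [hφ0] at h
  exact h

theorem integral_norm_le_sub (hφ : DesingOn E ub η r₀ φ) (hqg : IsQuasiGradient F E α)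
    (hF : Continuous F) (hE : Differentiable ℝ E)
    (hode : ∀ t ≥ (0:ℝ), HasDerivAt u (-(F (u t))) t) (hlow : ∀ t ≥ (0:ℝ), E ub ≤ E (u t))
    {a b : ℝ} (ha : 0 ≤ a) (hab : a ≤ b) (hball : ∀ s ∈ Icc a b, u s ∈ ball ub η) :
    α * ∫ s in a..b, ‖F (u s)‖ ≤ φ (E (u a) - E ub) - φ (E (u b) - E ub) := by
  set r : ℝ → ℝ := fun t => E (u t) - E ub
  have hr : ∀ s ∈ Icc a b, r s ∈ Ico 0 r₀ := fun s hs =>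
    hφ.sub_mem_Ico (hball s hs) (hlow s (ha.trans hs.1))
  obtain ⟨-, -, hφ0, -, hφcont, hφdiff, -, hφ'pos, -, hKL⟩ := hφ
  have hu : ContinuousOn u (Icc a b) :=
    (continuousOn_Ici_of_hasDerivAt hode).mono fun s hs => ha.trans hs.1
  have hr' : ∀ s ≥ 0, HasDerivAt r (-⟪gradient E (u s), F (u s)⟫) s := fun s hs =>
    (hasDerivAt_energy hE hode hs).sub_const _
  have hderiv : ∀ s ∈ Ioo a b, ∃ d, HasDerivWithinAt (fun t => -φ (r t)) d (Ioi s) s ∧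
      α * ‖F (u s)‖ ≤ d := by
    intro s hs
    have hs0 : 0 < s := ha.trans_lt hs.1
    rcases (hr s (Ioo_subset_Icc_self hs)).1.eq_or_lt with hrs | hrs
    · -- `r` vanishes from `s` on, while `r s = 0` is a local minimum of `r ≥ 0`
      have hflat : ∀ t ∈ Icc s b, r t = 0 := fun t ht => le_antisymm
        (hrs ▸ sub_le_sub_right (antitoneOn_energy hqg hE hode hs0.le (hs0.le.trans ht.1) ht.1) _)
        (sub_nonneg.2 (hlow t (hs0.le.trans ht.1)))
      have hmin : IsLocalMin r s := Filter.mem_of_superset (Ioi_mem_nhds hs0) fun t ht =>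
        (hrs ▸ sub_nonneg.2 (hlow t (le_of_lt ht)) : r s ≤ r t)
      have hFs : F (u s) = 0 :=
        hqg.eq_zero_of_inner_eq_zero (neg_eq_zero.1 (hmin.hasDerivAt_eq_zero (hr' s hs0.le)))
      refine ⟨0, ?_, by simp [hFs]⟩
      refine (hasDerivWithinAt_const s _ (-φ 0)).congr_of_eventuallyEq ?_ (by simp [← hrs])
      filter_upwards [Ioo_mem_nhdsGT hs.2] with t ht
      simp [hflat t ⟨ht.1.le, ht.2.le⟩]
    · have hrs' : r s ∈ Ioo 0 r₀ := ⟨hrs, (hr s (Ioo_subset_Icc_self hs)).2⟩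
      refine ⟨-(deriv φ (r s) * -⟪gradient E (u s), F (u s)⟫),
        (((hφdiff _ hrs').hasDerivAt.comp s (hr' s hs0.le)).neg).hasDerivWithinAt, ?_⟩
      have hKLs : 1 ≤ deriv φ (r s) * ‖gradient E (u s)‖ := by
        have := hKL (u s) (hball s (Ioo_subset_Icc_self hs)) (sub_ne_zero.1 hrs.ne')
        rwa [abs_of_pos hrs] at this
      calc α * ‖F (u s)‖ ≤ (deriv φ (r s) * ‖gradient E (u s)‖) * (α * ‖F (u s)‖) :=
            le_mul_of_one_le_left (by have := hqg.pos; positivity) hKLs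
        _ = deriv φ (r s) * (α * (‖gradient E (u s)‖ * ‖F (u s)‖)) := by ring
        _ ≤ deriv φ (r s) * ⟪gradient E (u s), F (u s)⟫ :=
            mul_le_mul_of_nonneg_left (hqg.angle _) (hφ'pos _ hrs').le
        _ = -(deriv φ (r s) * -⟪gradient E (u s), F (u s)⟫) := by ring
  choose! g' hg' hle using hderiv
  have hgcont : ContinuousOn (fun t => -φ (r t)) (Icc a b) :=
    (hφcont.comp ((hE.continuous.comp_continuousOn hu).sub continuousOn_const) hr).neg
  have hint : IntegrableOn (fun s => α * ‖F (u s)‖) (Icc a b) :=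
    (continuousOn_const.mul (hF.comp_continuousOn hu).norm).integrableOn_Icc
  have := intervalIntegral.integral_le_sub_of_hasDeriv_right_of_le hab hgcont hg' hint hle
  rw [intervalIntegral.integral_const_mul] at this
  linarith

theorem integral_norm_le (hφ : DesingOn E ub η r₀ φ) (hqg : IsQuasiGradient F E α)
    (hF : Continuous F) (hE : Differentiable ℝ E)
    (hode : ∀ t ≥ (0:ℝ), HasDerivAt u (-(F (u t))) t) (hlow : ∀ t ≥ (0:ℝ), E ub ≤ E (u t))
    {a b : ℝ} (ha : 0 ≤ a) (hab : a ≤ b) (hball : ∀ s ∈ Icc a b, u s ∈ ball ub η) :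
    ∫ s in a..b, ‖F (u s)‖ ≤ (1 / α) * φ (E (u a) - E ub) := by
  have h := hφ.integral_norm_le_sub hqg hF hE hode hlow ha hab hball
  have hb := hφ.apply_sub_nonneg (hball b ⟨hab, le_rfl⟩) (hlow b (ha.trans hab))
  rw [one_div_mul_eq_div, le_div_iff₀ hqg.pos]
  linarith

theorem norm_sub_le (hφ : DesingOn E ub η r₀ φ) (hqg : IsQuasiGradient F E α)
    (hF : Continuous F) (hE : Differentiable ℝ E)
    (hode : ∀ t ≥ (0:ℝ), HasDerivAt u (-(F (u t))) t) (hlow : ∀ t ≥ (0:ℝ), E ub ≤ E (u t))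
    {a b : ℝ} (ha : 0 ≤ a) (hab : a ≤ b) (hball : ∀ s ∈ Icc a b, u s ∈ ball ub η) :
    ‖u b - u a‖ ≤ (1 / α) * φ (E (u a) - E ub) :=
  (norm_sub_le_integral_norm hF hode ha hab).trans
    (hφ.integral_norm_le hqg hF hE hode hlow ha hab hball)

theorem integrableOn_Ioi (hφ : DesingOn E ub η r₀ φ) (hqg : IsQuasiGradient F E α)
    (hF : Continuous F) (hE : Differentiable ℝ E)
    (hode : ∀ t ≥ (0:ℝ), HasDerivAt u (-(F (u t))) t) (hlow : ∀ t ≥ (0:ℝ), E ub ≤ E (u t))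
    {t : ℝ} (ht : 0 ≤ t) (hball : ∀ s ≥ t, u s ∈ ball ub η) :
    IntegrableOn (fun s => F (u s)) (Ioi t) := by
  refine integrableOn_Ioi_of_intervalIntegral_norm_bounded ((1 / α) * φ (E (u t) - E ub)) t
    (fun b => ?_) tendsto_id ?_ (l := atTop) (b := id)
  · exact (hF.comp_continuousOn ((continuousOn_Ici_of_hasDerivAt hode).mono
      fun s hs => ht.trans hs.1)).integrableOn_Icc.mono_set Ioc_subset_Icc_self
  · filter_upwards [eventually_ge_atTop t] with b hb
    exact hφ.integral_norm_le hqg hF hE hode hlow ht hb fun s hs => hball s hs.1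

theorem integrableOn_Ioi_zero (hφ : DesingOn E ub η r₀ φ) (hqg : IsQuasiGradient F E α)
    (hF : Continuous F) (hE : Differentiable ℝ E)
    (hode : ∀ t ≥ (0:ℝ), HasDerivAt u (-(F (u t))) t) (hlow : ∀ t ≥ (0:ℝ), E ub ≤ E (u t))
    (hconv : Tendsto u atTop (𝓝 ub)) : IntegrableOn (fun s => F (u s)) (Ioi 0) := by
  obtain ⟨T, hT⟩ := eventually_atTop.1
    ((hconv.eventually (ball_mem_nhds ub hφ.radius_pos)).and (eventually_ge_atTop 0))
  exact integrableOn_Ioi_zero_of_integrableOn_Ioi hF hode (hT T le_rfl).2 <|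
    hφ.integrableOn_Ioi hqg hF hE hode hlow (hT T le_rfl).2 fun s hs => (hT s hs).1

theorem norm_sub_le_of_mapClusterPt (hφ : DesingOn E ub η r₀ φ) (hqg : IsQuasiGradient F E α)
    (hF : Continuous F) (hE : Differentiable ℝ E)
    (hode : ∀ t ≥ (0:ℝ), HasDerivAt u (-(F (u t))) t) (hlow : ∀ t ≥ (0:ℝ), E ub ≤ E (u t))
    (hub : MapClusterPt ub atTop u) {t : ℝ} (ht : 0 ≤ t) (hball : ∀ s ≥ t, u s ∈ ball ub η) :
    ‖u t - ub‖ ≤ (1 / α) * φ (E (u t) - E ub) := by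
  have h := hub.mem_closure_of_mem (s := closedBall (u t) ((1 / α) * φ (E (u t) - E ub))) <|
    mem_map.2 <| mem_of_superset (Ici_mem_atTop t) fun s hs => by
      rw [mem_preimage, mem_closedBall, dist_eq_norm]
      exact hφ.norm_sub_le hqg hF hE hode hlow ht hs fun z hz => hball z hz.1
  rwa [closure_closedBall, mem_closedBall', dist_eq_norm] at h

theorem forall_mem_ball (hφ : DesingOn E ub η r₀ φ) (hqg : IsQuasiGradient F E α)
    (hF : Continuous F) (hE : Differentiable ℝ E)
    (hode : ∀ t ≥ (0:ℝ), HasDerivAt u (-(F (u t))) t) (hlow : ∀ t ≥ (0:ℝ), E ub ≤ E (u t))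
    {t₁ : ℝ} (ht₁ : 0 ≤ t₁) (hdist : dist (u t₁) ub < η / 2)
    (hφt₁ : (1 / α) * φ (E (u t₁) - E ub) < η / 2) : ∀ τ ≥ t₁, u τ ∈ ball ub η := by
  have hφnn : 0 ≤ (1 / α) * φ (E (u t₁) - E ub) :=
    mul_nonneg (one_div_pos.2 hqg.pos).le <| hφ.apply_sub_nonneg
      (by rw [mem_ball]; linarith [dist_nonneg (x := u t₁) (y := ub)]) (hlow t₁ ht₁)
  set c := (dist (u t₁) ub + (1 / α) * φ (E (u t₁) - E ub) + η) / 2 with hc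
  have hcη : c < η := by linarith
  have hlt := ContinuousOn.forall_lt_of_barrier (f := fun τ => dist (u τ) ub) (c := c)
    ((continuous_id.dist continuous_const).comp_continuousOn
      ((continuousOn_Ici_of_hasDerivAt hode).mono (Ici_subset_Ici.2 ht₁)))
    (by linarith) fun τ hτ hle => by
      have hball : ∀ s ∈ Icc t₁ τ, u s ∈ ball ub η := fun s hs => (hle s hs).trans_lt hcη
      calc dist (u τ) ub ≤ dist (u τ) (u t₁) + dist (u t₁) ub := dist_triangle _ _ _
        _ ≤ (1 / α) * φ (E (u t₁) - E ub) + dist (u t₁) ub := by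
            rw [dist_eq_norm]
            gcongr
            exact hφ.norm_sub_le hqg hF hE hode hlow ht₁ hτ hball
        _ < c := by linarith
  exact fun τ hτ => (hlt τ hτ).trans hcη

theorem tendsto_of_mapClusterPt (hφ : DesingOn E ub η r₀ φ) (hqg : IsQuasiGradient F E α)
    (hF : Continuous F) (hE : Differentiable ℝ E)
    (hode : ∀ t ≥ (0:ℝ), HasDerivAt u (-(F (u t))) t) (hub : MapClusterPt ub atTop u) :
    Tendsto u atTop (𝓝 ub) := by
  have hlow : ∀ t ≥ (0:ℝ), E ub ≤ E (u t) := fun t => le_energy_of_mapClusterPt hqg hE hode hub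
  have hsmall : Tendsto (fun t => (1 / α) * φ (E (u t) - E ub)) atTop (𝓝 0) := by
    have h := hφ.tendsto_zero
      (by simpa using (tendsto_energy_of_mapClusterPt hqg hE hode hub).sub_const (E ub))
      (by filter_upwards [eventually_ge_atTop 0] with t ht using sub_nonneg.2 (hlow t ht))
    simpa using h.const_mul (1 / α)
  have hη : 0 < η / 2 := half_pos hφ.radius_pos
  obtain ⟨t₁, hdist, hφt₁, ht₁⟩ :=
    ((mapClusterPt_iff_frequently.1 hub _ (ball_mem_nhds ub hη)).and_eventually
      ((hsmall.eventually_lt_const hη).and (eventually_ge_atTop 0))).exists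
  have hball := hφ.forall_mem_ball hqg hF hE hode hlow ht₁ hdist hφt₁
  refine tendsto_iff_norm_sub_tendsto_zero.2
    (squeeze_zero' (Eventually.of_forall fun _ => norm_nonneg _) ?_ hsmall)
  filter_upwards [eventually_ge_atTop t₁] with t ht
  exact hφ.norm_sub_le_of_mapClusterPt hqg hF hE hode hlow hub (ht₁.trans ht)
    fun s hs => hball s (ht.trans hs)

theorem eventually_norm_sub_le (hφ : DesingOn E ub η r₀ φ) (hqg : IsQuasiGradient F E α)
    (hF : Continuous F) (hE : Differentiable ℝ E)
    (hode : ∀ t ≥ (0:ℝ), HasDerivAt u (-(F (u t))) t) (hlow : ∀ t ≥ (0:ℝ), E ub ≤ E (u t))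
    (hconv : Tendsto u atTop (𝓝 ub)) :
    ∀ᶠ t in atTop, ‖u t - ub‖ ≤ (1 / α) * φ (E (u t) - E ub) := by
  obtain ⟨T, hT⟩ := eventually_atTop.1
    ((hconv.eventually (ball_mem_nhds ub hφ.radius_pos)).and (eventually_ge_atTop 0))
  filter_upwards [eventually_ge_atTop T] with t ht
  exact hφ.norm_sub_le_of_mapClusterPt hqg hF hE hode hlow hconv.mapClusterPt (hT t ht).2
    fun s hs => (hT s (ht.trans hs)).1

end DesingOn

end KL

theorem stmt7_general {N : ℕ} (F : EuclideanSpace ℝ (Fin N) → EuclideanSpace ℝ (Fin N))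
    (hF : LocallyLipschitz F)
    (E : EuclideanSpace ℝ (Fin N) → ℝ) (hE : ContDiff ℝ 1 E)
    (α : ℝ) (hα : 0 < α)
    (hangle : ∀ u, α * (‖gradient E u‖ * ‖F u‖) ≤ ⟪gradient E u, F u⟫)
    (hrest : ∀ u, gradient E u = 0 ↔ F u = 0)
    (hKL : ∀ x, KLAt E x)
    (u : ℝ → EuclideanSpace ℝ (Fin N))
    (hode : ∀ t ≥ (0:ℝ), HasDerivAt u (-(F (u t))) t) :
    Tendsto (fun t => ‖u t‖) atTop atTop ∨
    ∃ uinf, F uinf = 0 ∧ Tendsto u atTop (𝓝 uinf) ∧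
      IntegrableOn (fun t => -(F (u t))) (Ioi 0) ∧
      Tendsto (fun t => -(F (u t))) atTop (𝓝 0) ∧
      ∀ η r₀ φ, DesingOn E uinf η r₀ φ →
        ∀ᶠ t in atTop, ‖u t - uinf‖ ≤ (1 / α) * φ (E (u t) - E uinf) := by
  by_cases hdiv : Tendsto (fun t => ‖u t‖) atTop atTop
  · exact Or.inl hdiv
  obtain ⟨ub, hub⟩ := exists_mapClusterPt_of_not_tendsto_norm_atTop hdiv
  obtain ⟨η, r₀, φ, hφ⟩ := hKL ub
  have hqg : IsQuasiGradient F E α := ⟨hα, hangle, hrest⟩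
  have hE' : Differentiable ℝ E := hE.differentiable one_ne_zero
  have hconv := hφ.tendsto_of_mapClusterPt hqg hF.continuous hE' hode hub
  have hlow : ∀ t ≥ (0:ℝ), E ub ≤ E (u t) := fun t => le_energy_of_mapClusterPt hqg hE' hode hub
  have hint := hφ.integrableOn_Ioi_zero hqg hF.continuous hE' hode hlow hconv
  have hFu : Tendsto (fun t => F (u t)) atTop (𝓝 (F ub)) := (hF.continuous.tendsto ub).comp hconv
  have hFub : F ub = 0 := eq_zero_of_integrableOn_Ioi_of_tendsto hint hFu
  refine Or.inr ⟨ub, hFub, hconv, hint.neg, by simpa [hFub] using hFu.neg,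
    fun η' r₀' φ' hφ' => hφ'.eventually_norm_sub_le hqg hF.continuous hE' hode hlow hconv⟩

theorem stmt7 {N : ℕ} (F : EuclideanSpace ℝ (Fin N) → EuclideanSpace ℝ (Fin N))
    (hF : LocallyLipschitz F)
    (E : EuclideanSpace ℝ (Fin N) → ℝ) (hE : ContDiff ℝ 1 E)
    (α : ℝ) (hα : 0 < α)
    (hangle : ∀ u, α * (‖gradient E u‖ * ‖F u‖) ≤ ⟪gradient E u, F u⟫)
    (hrest : ∀ u, gradient E u = 0 ↔ F u = 0)
    (hKL : ∀ x, KLAt E x)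
    (u : ℝ → EuclideanSpace ℝ (Fin N)) (u₀ : EuclideanSpace ℝ (Fin N)) (hu0 : u 0 = u₀)
    (hode : ∀ t ≥ (0:ℝ), HasDerivAt u (-(F (u t))) t) :
    Tendsto (fun t => ‖u t‖) atTop atTop ∨
    ∃ uinf, F uinf = 0 ∧ Tendsto u atTop (𝓝 uinf) ∧
      IntegrableOn (fun t => -(F (u t))) (Ioi 0) ∧
      Tendsto (fun t => -(F (u t))) atTop (𝓝 0) ∧
      ∀ η r₀ φ, DesingOn E uinf η r₀ φ →
        ∀ᶠ t in atTop, ‖u t - uinf‖ ≤ (1 / α) * φ (E (u t) - E uinf) :=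
  stmt7_general F hF E hE α hα hangle hrest hKL u hode
end
end

section
/- Let E : ℝ^N → ℝ be twice continuously differentiable and let u : [0, ∞) → ℝ^N be a bounded solution of the gradient system u′(t) + ∇E(u(t)) = 0 converging to a point u∞ which is a non trivial critical point of E. Let φ be a desingularizing function of E at u∞ on B(u∞, η), assume φ′(s) ≥ β·s^{−1/2} for some β > 0 and all small s > 0, set ψ = φ^{−1} (defined on [0, a) with a ∈ (0, +∞]), and let γ : [0, ∞) → (0, a) solve the one-dimensional worst-case gradient dynamics γ′(t) + ψ′(γ(t)) = 0 with γ(0) ∈ (0, a). Then there exist constants c, d > 0 and a time T ≥ 0 such that for all t ≥ T: E(u(t)) − E(u∞) ≤ c·ψ(γ(t)) and ‖u(t) − u∞‖ ≤ d·γ(t). -/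
/-!
Write `H t = E (u t) - E u∞` and `ρ = ψ ∘ γ`, so that `γ = φ ∘ ρ` and `ρ' = -(φ' ρ)⁻²`. For a
primitive `Φ` of `(φ')²`, `Φ ∘ ρ` decreases at unit speed, while the KL inequality
`φ' (H) ‖∇E (u)‖ ≥ 1` makes `Φ ∘ H` decrease at least at unit speed; hence `H t ≤ ρ (t - τ)` for a
fixed delay `τ`. The KL inequality also bounds the length of the remaining trajectory, so
`‖u t - u∞‖ ≤ φ (H t) ≤ γ (t - τ)`. Finally `φ' s ≥ β / √s` gives `φ s ≥ 2β√s`, hence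
`γ' ≥ -γ / (2β²)` and `ρ' ≥ -ρ / β²`, and Grönwall's inequality turns the delay `τ` into the
factors `exp (τ / (2β²))` and `exp (τ / β²)`. If `H` vanishes at some time, the trajectory is
stationary from then on.
-/

open Real Set Metric Filter Topology MeasureTheory

noncomputable section

lemma sub_le_mul_sub_of_hasDerivAt_le {f f' : ℝ → ℝ} {a C : ℝ}
    (hf : ∀ x ≥ a, HasDerivAt f (f' x) x) (hf' : ∀ x > a, f' x ≤ C)
    {x y : ℝ} (hax : a ≤ x) (hxy : x ≤ y) : f y - f x ≤ C * (y - x) :=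
  (convex_Ici a).image_sub_le_mul_sub_of_deriv_le
    (fun z hz => (hf z hz).continuousAt.continuousWithinAt)
    (fun z hz => (hf z (interior_subset hz)).differentiableAt.differentiableWithinAt)
    (fun z hz => by
      rw [interior_Ici] at hz
      rw [(hf z hz.le).deriv]
      exact hf' z hz)
    x hax y (hax.trans hxy) hxy

lemma mul_sub_le_sub_of_le_hasDerivAt {f f' : ℝ → ℝ} {a C : ℝ}
    (hf : ∀ x ≥ a, HasDerivAt f (f' x) x) (hf' : ∀ x > a, C ≤ f' x)
    {x y : ℝ} (hax : a ≤ x) (hxy : x ≤ y) : C * (y - x) ≤ f y - f x := by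
  have := sub_le_mul_sub_of_hasDerivAt_le (f := fun x => -f x) (C := -C)
    (fun x hx => (hf x hx).neg) (fun x hx => neg_le_neg (hf' x hx)) hax hxy
  linarith

lemma le_exp_mul_of_neg_mul_le_deriv {f f' : ℝ → ℝ} {a k : ℝ}
    (hf : ∀ x ≥ a, HasDerivAt f (f' x) x) (hf' : ∀ x > a, -(k * f x) ≤ f' x)
    {x y : ℝ} (hax : a ≤ x) (hxy : x ≤ y) : f x ≤ exp (k * (y - x)) * f y := by
  have hmono := mul_sub_le_sub_of_le_hasDerivAt (f := fun z => f z * exp (k * z)) (C := 0)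
    (f' := fun z => f' z * exp (k * z) + f z * (exp (k * z) * k))
    (fun z hz => (hf z hz).mul (by simpa using ((hasDerivAt_id z).const_mul k).exp))
    (fun z hz => by nlinarith [hf' z hz, exp_pos (k * z)]) hax hxy
  have hexp : exp (k * y) = exp (k * (y - x)) * exp (k * x) := by
    rw [← exp_add]; ring_nf
  refine le_of_mul_le_mul_right ?_ (exp_pos (k * x))
  calc f x * exp (k * x) ≤ f y * exp (k * y) := by linarith
    _ = exp (k * (y - x)) * f y * exp (k * x) := by rw [hexp]; ring

lemma exists_hasDerivAt_of_continuousOn_Ioo {g : ℝ → ℝ} {a b : ℝ}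
    (hg : ContinuousOn g (Ioo a b)) (hab : a < b) :
    ∃ G : ℝ → ℝ, ∀ x ∈ Ioo a b, HasDerivAt G (g x) x := by
  obtain ⟨c, hc⟩ := nonempty_Ioo.2 hab
  refine ⟨fun x => ∫ z in c..x, g z, fun x hx => ?_⟩
  exact intervalIntegral.integral_hasDerivAt_right
    ((hg.mono (ordConnected_Ioo.uIcc_subset hc hx)).intervalIntegrable)
    (hg.stronglyMeasurableAtFilter isOpen_Ioo x hx)
    (hg.continuousAt (isOpen_Ioo.mem_nhds hx))

lemma deriv_eq_inv_deriv_of_leftInverse {φ ψ : ℝ → ℝ} {s : ℝ}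
    (hψ : DifferentiableAt ℝ ψ (φ s)) (hφ : DifferentiableAt ℝ φ s)
    (hinv : ∀ᶠ x in 𝓝 s, ψ (φ x) = x) : deriv ψ (φ s) = (deriv φ s)⁻¹ := by
  have hcomp : HasDerivAt (ψ ∘ φ) (deriv ψ (φ s) * deriv φ s) s :=
    hψ.hasDerivAt.comp s hφ.hasDerivAt
  exact eq_inv_of_mul_eq_one_left (hcomp.unique ((hasDerivAt_id s).congr_of_eventuallyEq hinv))

lemma two_mul_mul_sqrt_le_of_div_sqrt_le_deriv {φ : ℝ → ℝ} {β b : ℝ}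
    (hφc : ContinuousOn φ (Icc 0 b)) (hφd : ∀ s ∈ Ioo 0 b, DifferentiableAt ℝ φ s)
    (hφ0 : φ 0 = 0) (hlow : ∀ s ∈ Ioo 0 b, β / √s ≤ deriv φ s) {s : ℝ} (hs : s ∈ Icc 0 b) :
    2 * β * √s ≤ φ s := by
  have hderiv : ∀ z ∈ Ioo 0 b,
      HasDerivAt (fun z => φ z - 2 * β * √z) (deriv φ z - β / √z) z := by
    intro z hz
    refine ((hφd z hz).hasDerivAt.sub
      ((hasDerivAt_sqrt hz.1.ne').const_mul (2 * β))).congr_deriv ?_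
    field_simp
  have hmono : MonotoneOn (fun z => φ z - 2 * β * √z) (Icc 0 b) := by
    refine monotoneOn_of_hasDerivWithinAt_nonneg (f' := fun z => deriv φ z - β / √z)
      (convex_Icc 0 b) (hφc.sub (continuous_const.mul continuous_sqrt).continuousOn)
      (fun z hz => ?_) (fun z hz => ?_)
    · rw [interior_Icc] at hz ⊢
      exact (hderiv z hz).hasDerivWithinAt
    · rw [interior_Icc] at hz
      exact sub_nonneg.2 (hlow z hz)
  have := hmono ⟨le_rfl, hs.1.trans hs.2⟩ hs hs.1
  simp only [hφ0, sqrt_zero, mul_zero, sub_zero] at this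
  linarith

lemma exists_le_sub_of_deriv_le_neg_one {Φ x y x' y' : ℝ → ℝ} {S : Set ℝ} {a : ℝ}
    (hΦ : StrictMonoOn Φ S) (hxS : ∀ t ≥ a, x t ∈ S) (hyS : ∀ t ≥ a, y t ∈ S)
    (hx : ∀ t ≥ a, HasDerivAt (fun t => Φ (x t)) (x' t) t) (hx' : ∀ t > a, x' t ≤ -1)
    (hy : ∀ t ≥ a, HasDerivAt (fun t => Φ (y t)) (y' t) t) (hy' : ∀ t > a, -1 ≤ y' t) :
    ∃ τ ≥ 0, ∀ t ≥ a + τ, x t ≤ y (t - τ) := by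
  obtain ⟨τ, hτ, hτ0⟩ : ∃ τ, Φ (x a) - Φ (y a) ≤ τ ∧ 0 ≤ τ :=
    ⟨_, le_max_left _ 0, le_max_right _ _⟩
  refine ⟨τ, hτ0, fun t ht => ?_⟩
  have hxt := sub_le_mul_sub_of_hasDerivAt_le hx hx' le_rfl (show a ≤ t by linarith)
  have hyt := mul_sub_le_sub_of_le_hasDerivAt hy hy' le_rfl (show a ≤ t - τ by linarith)
  exact (hΦ.le_iff_le (hxS t (by linarith)) (hyS _ (by linarith))).1 (by linarith)

lemma exists_forall_lt_of_deriv_le_neg_one {Φ y y' : ℝ → ℝ} {S : Set ℝ} {a c : ℝ}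
    (hΦ : StrictMonoOn Φ S) (hyS : ∀ t ≥ a, y t ∈ S) (hc : c ∈ S)
    (hy : ∀ t ≥ a, HasDerivAt (fun t => Φ (y t)) (y' t) t) (hy' : ∀ t > a, y' t ≤ -1) :
    ∃ T ≥ a, ∀ t ≥ T, y t < c := by
  obtain ⟨τ, hτ, hτ0⟩ : ∃ τ, Φ (y a) - Φ c < τ ∧ 0 ≤ τ :=
    ⟨_, (lt_add_one _).trans_le (le_max_left _ 0), le_max_right _ _⟩
  refine ⟨a + τ, by linarith, fun t ht => ?_⟩
  have hyt := sub_le_mul_sub_of_hasDerivAt_le hy hy' le_rfl (show a ≤ t by linarith)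
  exact (hΦ.lt_iff_lt (hyS t (by linarith)) hc).1 (by linarith)

lemma exists_strictMonoOn_hasDerivAt_sq {g : ℝ → ℝ} {a b : ℝ} (hab : a < b)
    (hg : ContinuousOn g (Ioo a b)) (hg0 : ∀ x ∈ Ioo a b, g x ≠ 0) :
    ∃ G : ℝ → ℝ, StrictMonoOn G (Ioo a b) ∧ ∀ x ∈ Ioo a b, HasDerivAt G (g x ^ 2) x := by
  obtain ⟨G, hG⟩ : ∃ G : ℝ → ℝ, ∀ x ∈ Ioo a b, HasDerivAt G (g x ^ 2) x :=
    exists_hasDerivAt_of_continuousOn_Ioo (hg.pow 2) hab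
  refine ⟨G, strictMonoOn_of_hasDerivWithinAt_pos (f' := fun x => g x ^ 2) (convex_Ioo a b)
    (fun x hx => (hG x hx).continuousAt.continuousWithinAt) (fun x hx => ?_)
    (fun x hx => sq_pos_of_ne_zero (hg0 x (interior_subset hx))), hG⟩
  rw [interior_Ioo] at hx ⊢
  exact (hG x hx).hasDerivWithinAt

lemma hasDerivAt_comp_eq_neg_one {Φ ρ g : ℝ → ℝ} {t : ℝ}
    (hΦ : HasDerivAt Φ (g (ρ t) ^ 2) (ρ t)) (hg : g (ρ t) ≠ 0)
    (hρ : HasDerivAt ρ (-(g (ρ t))⁻¹ ^ 2) t) : HasDerivAt (fun t => Φ (ρ t)) (-1) t :=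
  (hΦ.comp t hρ).congr_deriv (by field_simp)

lemma norm_sub_le_of_norm_deriv_le_neg_deriv {G : Type*} [NormedAddCommGroup G]
    [NormedSpace ℝ G] {u u' : ℝ → G} {K K' : ℝ → ℝ} {a : ℝ} {l : G}
    (hu : ∀ x ≥ a, HasDerivAt u (u' x) x) (hK : ∀ x ≥ a, HasDerivAt K (K' x) x)
    (hbound : ∀ x ≥ a, ‖u' x‖ ≤ -K' x) (hul : Tendsto u atTop (𝓝 l))
    (hK0 : Tendsto K atTop (𝓝 0)) : ‖u a - l‖ ≤ K a := by
  have hfence : ∀ b ≥ a, ‖u b - u a‖ ≤ K a - K b := fun b hb =>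
    image_norm_le_of_norm_deriv_right_le_deriv_boundary' (f := fun x => u x - u a)
      (B := fun x => K a - K x)
      (fun x hx => ((hu x hx.1).sub_const _).continuousAt.continuousWithinAt)
      (fun x hx => ((hu x hx.1).sub_const _).hasDerivWithinAt) (by simp)
      (fun x hx => ((hK x hx.1).const_sub _).continuousAt.continuousWithinAt)
      (fun x hx => ((hK x hx.1).const_sub _).hasDerivWithinAt)
      (fun x hx => hbound x hx.1) ⟨hb, le_rfl⟩
  have hlim := le_of_tendsto_of_tendsto (hul.sub_const (u a)).norm
    (tendsto_const_nhds.sub hK0) ((eventually_ge_atTop a).mono hfence)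
  rw [norm_sub_rev]
  simpa using hlim

section WorstCase

variable {φ ρ : ℝ → ℝ}

lemma hasDerivAt_leftInverse_comp {ψ γ : ℝ → ℝ} {r₀ : ℝ}
    (hφd : ∀ s ∈ Ioo 0 r₀, DifferentiableAt ℝ φ s) (hψ : ∀ s ∈ Ioo 0 r₀, ψ (φ s) = s)
    (hψd : ∀ y ∈ φ '' Ioo 0 r₀, DifferentiableAt ℝ ψ y)
    (hγmem : ∀ t ≥ 0, γ t ∈ φ '' Ioo 0 r₀) (hγ : ∀ t ≥ 0, HasDerivAt γ (-deriv ψ (γ t)) t)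
    {t : ℝ} (ht : 0 ≤ t) :
    ψ (γ t) ∈ Ioo 0 r₀ ∧ φ (ψ (γ t)) = γ t ∧
      HasDerivAt (fun t => ψ (γ t)) (-(deriv φ (ψ (γ t)))⁻¹ ^ 2) t := by
  obtain ⟨s, hs, hφs⟩ := hγmem t ht
  have hderiv : deriv ψ (φ s) = (deriv φ s)⁻¹ :=
    deriv_eq_inv_deriv_of_leftInverse (hψd _ ⟨s, hs, rfl⟩) (hφd s hs)
      (eventually_of_mem (isOpen_Ioo.mem_nhds hs) hψ)
  have hcomp := (hψd _ (hγmem t ht)).hasDerivAt.comp t (hγ t ht)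
  rw [← hφs] at hcomp ⊢
  rw [hψ s hs]
  refine ⟨hs, rfl, hcomp.congr_deriv ?_⟩
  rw [hderiv]
  ring

lemma worstCase_le_exp_mul {β b T : ℝ} (hβ : 0 < β) (hφ0 : φ 0 = 0)
    (hφc : ContinuousOn φ (Icc 0 b)) (hφd : ∀ s ∈ Ioo 0 b, DifferentiableAt ℝ φ s)
    (hlow : ∀ s ∈ Ioo 0 b, β / √s ≤ deriv φ s)
    (hρ : ∀ t ≥ T, ρ t ∈ Ioo 0 b) (hρd : ∀ t ≥ T, HasDerivAt ρ (-(deriv φ (ρ t))⁻¹ ^ 2) t)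
    {x y : ℝ} (hTx : T ≤ x) (hxy : x ≤ y) :
    ρ x ≤ exp ((β ^ 2)⁻¹ * (y - x)) * ρ y ∧
      φ (ρ x) ≤ exp ((2 * β ^ 2)⁻¹ * (y - x)) * φ (ρ y) := by
  have hinv : ∀ t ≥ T, 0 < (deriv φ (ρ t))⁻¹ ∧ (deriv φ (ρ t))⁻¹ ≤ √(ρ t) / β := by
    intro t ht
    have hpos : 0 < β / √(ρ t) := div_pos hβ (sqrt_pos.2 (hρ t ht).1)
    have hlt := hlow _ (hρ t ht)
    refine ⟨inv_pos.2 (hpos.trans_le hlt), ?_⟩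
    calc (deriv φ (ρ t))⁻¹ ≤ (β / √(ρ t))⁻¹ := inv_anti₀ hpos hlt
      _ = √(ρ t) / β := inv_div _ _
  constructor
  · refine le_exp_mul_of_neg_mul_le_deriv hρd (fun t ht => ?_) hTx hxy
    obtain ⟨h0, h1⟩ := hinv t ht.le
    have hsq : (deriv φ (ρ t))⁻¹ ^ 2 ≤ (√(ρ t) / β) ^ 2 := pow_le_pow_left₀ h0.le h1 2
    rw [div_pow, sq_sqrt (hρ t ht.le).1.le, div_eq_inv_mul] at hsq
    linarith
  · refine le_exp_mul_of_neg_mul_le_deriv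
      (fun t ht => (hφd _ (hρ t ht)).hasDerivAt.comp t (hρd t ht)) (fun t ht => ?_) hTx hxy
    obtain ⟨h0, h1⟩ := hinv t ht.le
    have hsqrt := two_mul_mul_sqrt_le_of_div_sqrt_le_deriv hφc hφd hφ0 hlow
      (Ioo_subset_Icc_self (hρ t ht.le))
    have hφρ : √(ρ t) / β ≤ (2 * β ^ 2)⁻¹ * φ (ρ t) := by
      rw [div_le_iff₀ hβ]
      field_simp
      nlinarith
    have hderiv : deriv φ (ρ t) * -(deriv φ (ρ t))⁻¹ ^ 2 = -(deriv φ (ρ t))⁻¹ := by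
      field_simp [(inv_pos.1 h0).ne']
    rw [hderiv, Function.comp_apply]
    linarith

lemma exists_worstCase_shift_le {r₀ β s₀ τ : ℝ} (hr₀ : 0 < r₀) (hβ : 0 < β) (hs₀ : 0 < s₀)
    (hτ : 0 ≤ τ) (hφ0 : φ 0 = 0) (hφc : ContinuousOn φ (Ico 0 r₀))
    (hφd : ∀ s ∈ Ioo 0 r₀, DifferentiableAt ℝ φ s) (hφdc : ContinuousOn (deriv φ) (Ioo 0 r₀))
    (hφdp : ∀ s ∈ Ioo 0 r₀, 0 < deriv φ s) (hlow : ∀ s ∈ Ioo 0 s₀, β / √s ≤ deriv φ s)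
    (hρ : ∀ t ≥ 0, ρ t ∈ Ioo 0 r₀) (hρd : ∀ t ≥ 0, HasDerivAt ρ (-(deriv φ (ρ t))⁻¹ ^ 2) t) :
    ∃ T, ∃ c > 0, ∃ d > 0, ∀ t ≥ T, ρ (t - τ) ≤ c * ρ t ∧ φ (ρ (t - τ)) ≤ d * φ (ρ t) := by
  set b := min s₀ r₀ / 2 with hb
  have hb0 : 0 < b := by positivity
  have hbr₀ : b < r₀ := by linarith [min_le_right s₀ r₀]
  have hbs₀ : b < s₀ := by linarith [min_le_left s₀ r₀]
  obtain ⟨Φ, hΦ, hΦ'⟩ := exists_strictMonoOn_hasDerivAt_sq hr₀ hφdc fun s hs => (hφdp s hs).ne'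
  obtain ⟨T, hT0, hT⟩ := exists_forall_lt_of_deriv_le_neg_one hΦ hρ ⟨hb0, hbr₀⟩
    (fun t ht => hasDerivAt_comp_eq_neg_one (hΦ' _ (hρ t ht)) (hφdp _ (hρ t ht)).ne' (hρd t ht))
    (fun _ _ => le_rfl)
  refine ⟨T + τ, exp ((β ^ 2)⁻¹ * τ), exp_pos _, exp ((2 * β ^ 2)⁻¹ * τ), exp_pos _,
    fun t ht => ?_⟩
  have hIoo : Ioo 0 b ⊆ Ioo 0 r₀ := Ioo_subset_Ioo_right hbr₀.le
  have := worstCase_le_exp_mul hβ hφ0 (hφc.mono (Icc_subset_Ico_right hbr₀))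
    (fun s hs => hφd s (hIoo hs)) (fun s hs => hlow s ⟨hs.1, hs.2.trans hbs₀⟩)
    (fun t ht => ⟨(hρ t (hT0.trans ht)).1, hT t ht⟩) (fun t ht => hρd t (hT0.trans ht))
    (show T ≤ t - τ by linarith) (show t - τ ≤ t by linarith)
  simpa using this

end WorstCase

section GradientFlow

variable {F : Type*} [NormedAddCommGroup F] [InnerProductSpace ℝ F] [CompleteSpace F]
  {E : F → ℝ} {u : ℝ → F} {l : F} {φ ρ : ℝ → ℝ} {r₀ β s₀ T₀ : ℝ}

lemma hasDerivAt_comp_of_hasDerivAt_neg_gradient {t : ℝ} (hE : DifferentiableAt ℝ E (u t))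
    (hu : HasDerivAt u (-gradient E (u t)) t) :
    HasDerivAt (fun s => E (u s)) (-‖gradient E (u t)‖ ^ 2) t := by
  have h := hE.hasGradientAt.hasFDerivAt.comp_hasDerivAt t hu
  rwa [InnerProductSpace.toDual_apply_apply, inner_neg_right, real_inner_self_eq_norm_sq] at h

lemma comp_le_comp_of_gradientFlow (hE : Differentiable ℝ E)
    (hu : ∀ t ≥ 0, HasDerivAt u (-gradient E (u t)) t) {s t : ℝ} (hs : 0 ≤ s) (hst : s ≤ t) :
    E (u t) ≤ E (u s) := by
  have := sub_le_mul_sub_of_hasDerivAt_le (C := 0)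
    (fun x hx => hasDerivAt_comp_of_hasDerivAt_neg_gradient (hE _) (hu x hx))
    (fun x _ => neg_nonpos.2 (sq_nonneg _)) hs hst
  linarith

lemma le_comp_of_gradientFlow (hE : Differentiable ℝ E)
    (hu : ∀ t ≥ 0, HasDerivAt u (-gradient E (u t)) t) (hl : Tendsto u atTop (𝓝 l))
    {t : ℝ} (ht : 0 ≤ t) : E l ≤ E (u t) :=
  le_of_tendsto ((hE.continuous.tendsto l).comp hl)
    ((eventually_ge_atTop t).mono fun _ hs => comp_le_comp_of_gradientFlow hE hu ht hs)

lemma gradientFlow_eq_of_comp_eq (hE : Differentiable ℝ E)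
    (hu : ∀ t ≥ 0, HasDerivAt u (-gradient E (u t)) t) (hl : Tendsto u atTop (𝓝 l))
    {t₁ : ℝ} (ht₁ : 0 ≤ t₁) (hEq : E (u t₁) = E l) {t : ℝ} (ht : t₁ < t) : u t = l := by
  have hconstE : ∀ s ≥ t₁, E (u s) = E l := fun s hs =>
    le_antisymm (hEq ▸ comp_le_comp_of_gradientFlow hE hu ht₁ hs)
      (le_comp_of_gradientFlow hE hu hl (ht₁.trans hs))
  have hgrad : ∀ s > t₁, gradient E (u s) = 0 := fun s hs => by
    have h0 : HasDerivAt (fun s => E (u s)) 0 s :=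
      (hasDerivAt_const s (E l)).congr_of_eventuallyEq
        ((eventually_gt_nhds hs).mono fun x hx => hconstE x hx.le)
    have := (hasDerivAt_comp_of_hasDerivAt_neg_gradient (hE _) (hu s (by linarith))).unique h0
    simpa using this
  have hconst : ∀ s ≥ t, u s = u t := fun s hs =>
    constant_of_has_deriv_right_zero
      (fun x hx => (hu x (by linarith [hx.1])).continuousAt.continuousWithinAt)
      (fun x hx => by
        simpa [hgrad x (by linarith [hx.1])] using (hu x (by linarith [hx.1])).hasDerivWithinAt)
      s ⟨hs, le_rfl⟩
  exact tendsto_nhds_unique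
    (tendsto_const_nhds.congr' ((eventually_ge_atTop t).mono fun s hs => (hconst s hs).symm)) hl

lemma norm_sub_le_of_one_le_deriv_mul_norm_gradient (hE : Differentiable ℝ E)
    (hu : ∀ t ≥ T₀, HasDerivAt u (-gradient E (u t)) t) (hl : Tendsto u atTop (𝓝 l))
    (hφ0 : φ 0 = 0) (hφc : ContinuousWithinAt φ (Ioo 0 r₀) 0)
    (hφd : ∀ s ∈ Ioo 0 r₀, DifferentiableAt ℝ φ s)
    (hKL : ∀ t ≥ T₀, E (u t) - E l ∈ Ioo 0 r₀ ∧
      1 ≤ deriv φ (E (u t) - E l) * ‖gradient E (u t)‖)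
    {t : ℝ} (ht : T₀ ≤ t) : ‖u t - l‖ ≤ φ (E (u t) - E l) := by
  have hH : ∀ s ≥ T₀, HasDerivAt (fun s => E (u s) - E l) (-‖gradient E (u s)‖ ^ 2) s :=
    fun s hs => (hasDerivAt_comp_of_hasDerivAt_neg_gradient (hE _) (hu s hs)).sub_const _
  have hHlim : Tendsto (fun s => E (u s) - E l) atTop (𝓝[Ioo 0 r₀] 0) :=
    tendsto_nhdsWithin_iff.2 ⟨by simpa using ((hE.continuous.tendsto l).comp hl).sub_const (E l),
      (eventually_ge_atTop T₀).mono fun s hs => (hKL s hs).1⟩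
  refine norm_sub_le_of_norm_deriv_le_neg_deriv (fun s hs => hu s (ht.trans hs))
    (K' := fun s => deriv φ (E (u s) - E l) * -‖gradient E (u s)‖ ^ 2)
    (fun s hs => (hφd _ (hKL s (ht.trans hs)).1).hasDerivAt.comp s (hH s (ht.trans hs)))
    (fun s hs => ?_) hl (hφ0 ▸ hφc.tendsto.comp hHlim)
  have hKLs := (hKL s (ht.trans hs)).2
  rw [norm_neg]
  nlinarith [norm_nonneg (gradient E (u s))]

lemma exists_sub_le_comp_sub_of_one_le_deriv_mul_norm_gradient (hr₀ : 0 < r₀)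
    (hE : Differentiable ℝ E) (hu : ∀ t ≥ T₀, HasDerivAt u (-gradient E (u t)) t)
    (hφdc : ContinuousOn (deriv φ) (Ioo 0 r₀)) (hφdp : ∀ s ∈ Ioo 0 r₀, 0 < deriv φ s)
    (hKL : ∀ t ≥ T₀, E (u t) - E l ∈ Ioo 0 r₀ ∧
      1 ≤ deriv φ (E (u t) - E l) * ‖gradient E (u t)‖)
    (hρ : ∀ t ≥ T₀, ρ t ∈ Ioo 0 r₀)
    (hρd : ∀ t ≥ T₀, HasDerivAt ρ (-(deriv φ (ρ t))⁻¹ ^ 2) t) :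
    ∃ τ ≥ 0, ∀ t ≥ T₀ + τ, E (u t) - E l ≤ ρ (t - τ) := by
  obtain ⟨Φ, hΦ, hΦ'⟩ := exists_strictMonoOn_hasDerivAt_sq hr₀ hφdc fun s hs => (hφdp s hs).ne'
  refine exists_le_sub_of_deriv_le_neg_one hΦ (fun t ht => (hKL t ht).1) hρ
    (fun t ht => (hΦ' _ (hKL t ht).1).comp t
      ((hasDerivAt_comp_of_hasDerivAt_neg_gradient (hE _) (hu t ht)).sub_const (E l)))
    (fun t ht => ?_)
    (fun t ht => hasDerivAt_comp_eq_neg_one (hΦ' _ (hρ t ht)) (hφdp _ (hρ t ht)).ne' (hρd t ht))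
    (fun _ _ => le_rfl)
  nlinarith [(hKL t ht.le).2]

lemma exists_rate_of_one_le_deriv_mul_norm_gradient (hr₀ : 0 < r₀) (hβ : 0 < β) (hs₀ : 0 < s₀)
    (hT₀ : 0 ≤ T₀) (hE : Differentiable ℝ E) (hu : ∀ t ≥ 0, HasDerivAt u (-gradient E (u t)) t)
    (hl : Tendsto u atTop (𝓝 l)) (hφ0 : φ 0 = 0) (hφc : ContinuousOn φ (Ico 0 r₀))
    (hφd : ∀ s ∈ Ioo 0 r₀, DifferentiableAt ℝ φ s) (hφdc : ContinuousOn (deriv φ) (Ioo 0 r₀))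
    (hφdp : ∀ s ∈ Ioo 0 r₀, 0 < deriv φ s) (hlow : ∀ s ∈ Ioo 0 s₀, β / √s ≤ deriv φ s)
    (hKL : ∀ t ≥ T₀, E (u t) - E l ∈ Ioo 0 r₀ ∧
      1 ≤ deriv φ (E (u t) - E l) * ‖gradient E (u t)‖)
    (hρ : ∀ t ≥ 0, ρ t ∈ Ioo 0 r₀) (hρd : ∀ t ≥ 0, HasDerivAt ρ (-(deriv φ (ρ t))⁻¹ ^ 2) t) :
    ∃ c > 0, ∃ d > 0, ∃ T ≥ 0, ∀ t ≥ T,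
      E (u t) - E l ≤ c * ρ t ∧ ‖u t - l‖ ≤ d * φ (ρ t) := by
  have hu₀ : ∀ t ≥ T₀, HasDerivAt u (-gradient E (u t)) t := fun t ht => hu t (hT₀.trans ht)
  obtain ⟨τ, hτ, hshift⟩ := exists_sub_le_comp_sub_of_one_le_deriv_mul_norm_gradient hr₀ hE hu₀
    hφdc hφdp hKL (fun t ht => hρ t (hT₀.trans ht)) (fun t ht => hρd t (hT₀.trans ht))
  obtain ⟨T, c, hc, d, hd, hrate⟩ :=
    exists_worstCase_shift_le hr₀ hβ hs₀ hτ hφ0 hφc hφd hφdc hφdp hlow hρ hρd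
  have hφmono : StrictMonoOn φ (Ico 0 r₀) :=
    strictMonoOn_of_deriv_pos (convex_Ico 0 r₀) hφc (by simpa using hφdp)
  refine ⟨c, hc, d, hd, max (T₀ + τ) T, le_max_of_le_left (by linarith), fun t ht => ?_⟩
  have htτ : T₀ + τ ≤ t := le_of_max_le_left ht
  obtain ⟨hρshift, hφshift⟩ := hrate t (le_of_max_le_right ht)
  refine ⟨(hshift t htτ).trans hρshift, ?_⟩
  calc ‖u t - l‖ ≤ φ (E (u t) - E l) :=
        norm_sub_le_of_one_le_deriv_mul_norm_gradient hE hu₀ hl hφ0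
          ((hφc 0 ⟨le_rfl, hr₀⟩).mono Ioo_subset_Ico_self) hφd hKL (by linarith)
    _ ≤ φ (ρ (t - τ)) := hφmono.monotoneOn (Ioo_subset_Ico_self (hKL t (by linarith)).1)
        (Ioo_subset_Ico_self (hρ _ (by linarith))) (hshift t htτ)
    _ ≤ d * φ (ρ t) := hφshift

end GradientFlow

lemma DesingOn.exists_forall_mem_Ioo_and_one_le {N : ℕ} {E : EuclideanSpace ℝ (Fin N) → ℝ}
    {u : ℝ → EuclideanSpace ℝ (Fin N)} {l : EuclideanSpace ℝ (Fin N)} {η r₀ : ℝ} {φ : ℝ → ℝ}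
    (hφ : DesingOn E l η r₀ φ) (hl : Tendsto u atTop (𝓝 l)) (hgt : ∀ t ≥ 0, E l < E (u t)) :
    ∃ T₀ ≥ 0, ∀ t ≥ T₀, E (u t) - E l ∈ Ioo 0 r₀ ∧
      1 ≤ deriv φ (E (u t) - E l) * ‖gradient E (u t)‖ := by
  obtain ⟨-, hη, -, -, -, -, -, -, hr₀, hKL⟩ := hφ
  obtain ⟨T, hT⟩ := Metric.tendsto_atTop.1 hl η hη
  refine ⟨max T 0, le_max_right _ _, fun t ht => ?_⟩
  have hball : u t ∈ ball l η := hT t (le_of_max_le_left ht)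
  have hpos : 0 < E (u t) - E l := sub_pos.2 (hgt t (le_of_max_le_right ht))
  have habs : |E (u t) - E l| = E (u t) - E l := abs_of_pos hpos
  exact ⟨⟨hpos, habs ▸ hr₀ _ hball⟩, habs ▸ hKL _ hball (sub_ne_zero.1 hpos.ne')⟩

theorem stmt9_general {N : ℕ} (E : EuclideanSpace ℝ (Fin N) → ℝ) (hE : ContDiff ℝ 2 E)
    (u : ℝ → EuclideanSpace ℝ (Fin N))
    (hode : ∀ t ≥ (0:ℝ), HasDerivAt u (-(gradient E (u t))) t)
    (uinf : EuclideanSpace ℝ (Fin N)) (hconv : Tendsto u atTop (𝓝 uinf))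
    (η r₀ : ℝ) (φ : ℝ → ℝ) (hφ : DesingOn E uinf η r₀ φ)
    (β s₀ : ℝ) (hβ : 0 < β) (hs₀ : 0 < s₀)
    (hlow : ∀ s ∈ Ioo (0:ℝ) s₀, β / Real.sqrt s ≤ deriv φ s)
    (ψ : ℝ → ℝ) (hψ : ∀ s ∈ Ico (0:ℝ) r₀, ψ (φ s) = s)
    (hψd : ∀ y ∈ φ '' Ioo (0:ℝ) r₀, DifferentiableAt ℝ ψ y)
    (γ : ℝ → ℝ) (hγmem : ∀ t ≥ (0:ℝ), γ t ∈ φ '' Ioo (0:ℝ) r₀)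
    (hγode : ∀ t ≥ (0:ℝ), HasDerivAt γ (-(deriv ψ (γ t))) t) :
    ∃ c > 0, ∃ d > 0, ∃ T ≥ (0:ℝ), ∀ t ≥ T,
      E (u t) - E uinf ≤ c * ψ (γ t) ∧ ‖u t - uinf‖ ≤ d * γ t := by
  obtain ⟨hr₀, -, hφ0, hφnn, hφc, hφd, hφdc, hφdp, -, -⟩ := id hφ
  have hEd : Differentiable ℝ E := hE.differentiable (by norm_num)
  have hρ := fun t (ht : 0 ≤ t) => hasDerivAt_leftInverse_comp hφd
    (fun s hs => hψ s (Ioo_subset_Ico_self hs)) hψd hγmem hγode ht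
  by_cases hstop : ∃ t₁ ≥ 0, E (u t₁) = E uinf
  · obtain ⟨t₁, ht₁, hEq⟩ := hstop
    refine ⟨1, one_pos, 1, one_pos, t₁ + 1, by linarith, fun t ht => ?_⟩
    obtain ⟨hρt, hφρ, -⟩ := hρ t (by linarith)
    rw [gradientFlow_eq_of_comp_eq hEd hode hconv ht₁ hEq (by linarith), sub_self, sub_self,
      norm_zero, one_mul, one_mul]
    exact ⟨hρt.1.le, hφρ ▸ hφnn _ (Ioo_subset_Ico_self hρt)⟩
  push Not at hstop
  obtain ⟨T₀, hT₀, hKL⟩ := hφ.exists_forall_mem_Ioo_and_one_le hconv fun t ht =>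
    (le_comp_of_gradientFlow hEd hode hconv ht).lt_of_ne' (hstop t ht)
  obtain ⟨c, hc, d, hd, T, hT, hrate⟩ := exists_rate_of_one_le_deriv_mul_norm_gradient hr₀ hβ hs₀
    hT₀ hEd hode hconv hφ0 hφc hφd hφdc hφdp hlow hKL (fun t ht => (hρ t ht).1)
    (fun t ht => (hρ t ht).2.2)
  refine ⟨c, hc, d, hd, T, hT, fun t ht => ⟨(hrate t ht).1, ?_⟩⟩
  simpa only [(hρ t (hT.trans ht)).2.1] using (hrate t ht).2

theorem stmt9 {N : ℕ} (E : EuclideanSpace ℝ (Fin N) → ℝ) (hE : ContDiff ℝ 2 E)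
    (u : ℝ → EuclideanSpace ℝ (Fin N))
    (hode : ∀ t ≥ (0:ℝ), HasDerivAt u (-(gradient E (u t))) t)
    (hbdd : ∃ C, ∀ t ≥ (0:ℝ), ‖u t‖ ≤ C)
    (uinf : EuclideanSpace ℝ (Fin N)) (hconv : Tendsto u atTop (𝓝 uinf))
    (hcrit : gradient E uinf = 0)
    (hnontriv : uinf ∉ interior {x | gradient E x = 0})
    (η r₀ : ℝ) (φ : ℝ → ℝ) (hφ : DesingOn E uinf η r₀ φ)
    (β s₀ : ℝ) (hβ : 0 < β) (hs₀ : 0 < s₀)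
    (hlow : ∀ s ∈ Ioo (0:ℝ) s₀, β / Real.sqrt s ≤ deriv φ s)
    (ψ : ℝ → ℝ) (hψ : ∀ s ∈ Ico (0:ℝ) r₀, ψ (φ s) = s)
    (hψd : ∀ y ∈ φ '' Ioo (0:ℝ) r₀, DifferentiableAt ℝ ψ y)
    (γ : ℝ → ℝ) (hγmem : ∀ t ≥ (0:ℝ), γ t ∈ φ '' Ioo (0:ℝ) r₀)
    (hγode : ∀ t ≥ (0:ℝ), HasDerivAt γ (-(deriv ψ (γ t))) t) :
    ∃ c > 0, ∃ d > 0, ∃ T ≥ (0:ℝ), ∀ t ≥ T,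
      E (u t) - E uinf ≤ c * ψ (γ t) ∧ ‖u t - uinf‖ ≤ d * γ t :=
  stmt9_general E hE u hode uinf hconv η r₀ φ hφ β s₀ hβ hs₀ hlow ψ hψ hψd γ hγmem hγode
end
end

section
/- Let F : ℝ^N → ℝ^N be locally Lipschitz, and let E : ℝ^N → ℝ be twice continuously differentiable. Assume that for every R > 0, F is quasi-gradient for E on the closed ball B̄(0, R) with some angle constant α_R > 0, that E has the KL property at every point, and that for every R > 0 there exists b > 0 with ‖∇E(u)‖ ≤ b·‖F(u)‖ for all u ∈ B̄(0, R). Let u solve u′(t) + F(u(t)) = 0 and assume u(t) converges to some rest point u∞ of F. Let φ be a desingularizing function of E at u∞ satisfying φ′(s) ≥ β·s^{−1/2} for some β > 0 and all small s > 0, set ψ = φ^{−1}, and let γ solve γ′(t) + ψ′(γ(t)) = 0 with γ(0) > 0. Then there exist constants c, d > 0 and t₀ ∈ ℝ such that ‖u(t) − u∞‖ ≤ d·γ(c·t + t₀) for all sufficiently large t. -/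
open Real Set Metric Filter Topology MeasureTheory RealInnerProductSpace

noncomputable section

/-! The energy gap `H t = E (u t) - E u∞` decreases along the flow. If it vanishes at some
time, the angle condition and the rest-point equivalence stop the trajectory at `u∞`. Otherwise
the KL inequality holds along a tail of the trajectory, and with the angle condition it gives
the length estimate `α ‖u t - u∞‖ ≤ φ (H t)`; adding `‖∇E‖ ≤ b ‖F‖` it also gives
`d/dt Φ (H t) ≤ -α / b` for `Φ = modelTime φ p`, i.e. `Φ x = ∫_p^x φ'(s)² ds`. Since
`Φ (ψ (γ s))` decreases at unit speed, comparing in the time scale `Φ` yields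
`H t < ψ (γ (α / b * (t - T)))`, hence `α ‖u t - u∞‖ ≤ γ (α / b * (t - T))`. -/

theorem antitoneOn_Ici_of_hasDerivAt_nonpos {f f' : ℝ → ℝ} {a : ℝ}
    (hf : ∀ x ≥ a, HasDerivAt f (f' x) x) (hf' : ∀ x > a, f' x ≤ 0) : AntitoneOn f (Ici a) := by
  refine antitoneOn_of_hasDerivWithinAt_nonpos (f' := f') (convex_Ici a)
    (fun x hx => (hf x hx).continuousAt.continuousWithinAt) (fun x hx => ?_) (fun x hx => ?_)
  all_goals rw [interior_Ici] at hx
  exacts [(hf x hx.le).hasDerivWithinAt, hf' x hx]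

theorem exists_pos_closedBall_of_tendsto_atTop {V : Type*} [NormedAddCommGroup V] {u : ℝ → V}
    {l : V} {a : ℝ} (hu : ContinuousOn u (Ici a)) (hl : Tendsto u atTop (𝓝 l)) :
    ∃ R > 0, ∀ t ≥ a, u t ∈ closedBall 0 R := by
  obtain ⟨M, hM⟩ := eventually_atTop.1 (hl (ball_mem_nhds l one_pos))
  have hnear : Bornology.IsBounded (u '' Icc a M) :=
    (isCompact_Icc.image_of_continuousOn (hu.mono Icc_subset_Ici_self)).isBounded
  have hfar : Bornology.IsBounded (u '' Ici M) :=
    isBounded_ball.subset (image_subset_iff.2 hM)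
  obtain ⟨R, hR, hsub⟩ := (hnear.union hfar).subset_closedBall_lt 0 0
  refine ⟨R, hR, fun t ht => hsub ?_⟩
  rcases le_total t M with htM | htM
  exacts [Or.inl ⟨t, ⟨ht, htM⟩, rfl⟩, Or.inr ⟨t, htM, rfl⟩]

theorem norm_sub_le_of_norm_deriv_le_neg_deriv_s10 {V : Type*} [NormedAddCommGroup V]
    [NormedSpace ℝ V] {u u' : ℝ → V} {ζ ζ' : ℝ → ℝ} {a : ℝ} {l : V}
    (hu : ∀ t ≥ a, HasDerivAt u (u' t) t) (hζ : ∀ t ≥ a, HasDerivAt ζ (ζ' t) t)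
    (hle : ∀ t ≥ a, ‖u' t‖ ≤ -ζ' t) (hζ0 : ∀ t ≥ a, 0 ≤ ζ t) (hl : Tendsto u atTop (𝓝 l)) :
    ‖u a - l‖ ≤ ζ a := by
  have hseg : ∀ b ≥ a, ‖u b - u a‖ ≤ ζ a - ζ b := fun b hb =>
    image_norm_le_of_norm_deriv_right_le_deriv_boundary' (f := fun t => u t - u a)
      (B := fun t => ζ a - ζ t)
      (fun t ht => ((hu t ht.1).sub_const _).continuousAt.continuousWithinAt)
      (fun t ht => ((hu t ht.1).sub_const _).hasDerivWithinAt) (by simp)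
      (fun t ht => ((hζ t ht.1).const_sub _).continuousAt.continuousWithinAt)
      (fun t ht => ((hζ t ht.1).const_sub _).hasDerivWithinAt) (fun t ht => hle t ht.1)
      ⟨hb, le_rfl⟩
  rw [norm_sub_rev]
  exact le_of_tendsto (hl.sub_const (u a)).norm
    (eventually_atTop.2 ⟨a, fun b hb => (hseg b hb).trans (by linarith [hζ0 b hb])⟩)

def modelTime (φ : ℝ → ℝ) (p x : ℝ) : ℝ := ∫ s in p..x, deriv φ s ^ 2

section modelTime

variable {φ : ℝ → ℝ} {a b p : ℝ}

theorem hasDerivAt_modelTime (hφ' : ContinuousOn (deriv φ) (Ioo a b)) (hp : p ∈ Ioo a b)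
    {x : ℝ} (hx : x ∈ Ioo a b) : HasDerivAt (modelTime φ p) (deriv φ x ^ 2) x := by
  have hsq : ContinuousOn (fun s => deriv φ s ^ 2) (Ioo a b) := hφ'.pow 2
  exact intervalIntegral.integral_hasDerivAt_right
    ((hsq.mono (ordConnected_Ioo.uIcc_subset hp hx)).intervalIntegrable)
    ((hsq.stronglyMeasurableAtFilter isOpen_Ioo) x hx) (hsq.continuousAt (Ioo_mem_nhds hx.1 hx.2))

theorem strictMonoOn_modelTime (hφ' : ContinuousOn (deriv φ) (Ioo a b))
    (hφ'pos : ∀ s ∈ Ioo a b, 0 < deriv φ s) (hp : p ∈ Ioo a b) :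
    StrictMonoOn (modelTime φ p) (Ioo a b) := by
  refine strictMonoOn_of_hasDerivWithinAt_pos (f' := fun x => deriv φ x ^ 2) (convex_Ioo a b)
    (fun x hx => (hasDerivAt_modelTime hφ' hp hx).continuousAt.continuousWithinAt)
    (fun x hx => ?_) (fun x hx => ?_)
  all_goals rw [interior_Ioo] at hx
  exacts [(hasDerivAt_modelTime hφ' hp hx).hasDerivWithinAt, pow_pos (hφ'pos x hx) 2]

end modelTime

theorem Set.LeftInvOn.deriv_mul_deriv_eq_one {φ ψ : ℝ → ℝ} {s : Set ℝ} {x : ℝ}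
    (hψ : LeftInvOn ψ φ s) (hs : s ∈ 𝓝 x) (hψd : DifferentiableAt ℝ ψ (φ x))
    (hφd : DifferentiableAt ℝ φ x) :
    deriv ψ (φ x) * deriv φ x = 1 :=
  (hψd.hasDerivAt.comp x hφd.hasDerivAt).unique <|
    (hasDerivAt_id x).congr_of_eventuallyEq (Filter.mem_of_superset hs fun _ hy => hψ hy)

theorem modelTime_comp_solution {φ ψ γ : ℝ → ℝ} {a b : ℝ} (hψ : LeftInvOn ψ φ (Ioo a b))
    (hψd : ∀ y ∈ φ '' Ioo a b, DifferentiableAt ℝ ψ y)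
    (hφd : ∀ s ∈ Ioo a b, DifferentiableAt ℝ φ s) (hφ' : ContinuousOn (deriv φ) (Ioo a b))
    (hγ : ∀ t ≥ 0, γ t ∈ φ '' Ioo a b) (hγode : ∀ t ≥ 0, HasDerivAt γ (-deriv ψ (γ t)) t) :
    ∀ s ≥ 0, modelTime φ (ψ (γ 0)) (ψ (γ s)) = -s := by
  have hmem : ∀ t ≥ 0, ψ (γ t) ∈ Ioo a b := fun t ht => hψ.mapsTo (surjOn_image φ _) (hγ t ht)
  have hderiv : ∀ t ≥ 0,
      HasDerivAt (fun t => modelTime φ (ψ (γ 0)) (ψ (γ t)) + t) 0 t := by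
    intro t ht
    have hinv := hψ.deriv_mul_deriv_eq_one (Ioo_mem_nhds (hmem t ht).1 (hmem t ht).2)
      (by rw [hψ.rightInvOn_image (hγ t ht)]; exact hψd _ (hγ t ht)) (hφd _ (hmem t ht))
    rw [hψ.rightInvOn_image (hγ t ht)] at hinv
    refine (((hasDerivAt_modelTime hφ' (hmem 0 le_rfl) (hmem t ht)).comp t
      ((hψd _ (hγ t ht)).hasDerivAt.comp t (hγode t ht))).add (hasDerivAt_id' t)).congr_deriv ?_
    linear_combination -(deriv ψ (γ t) * deriv φ (ψ (γ t)) + 1) * hinv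
  intro s hs
  have h0 : modelTime φ (ψ (γ 0)) (ψ (γ 0)) = 0 := intervalIntegral.integral_same
  have hconst := constant_of_has_deriv_right_zero
    (fun t ht => (hderiv t ht.1).continuousAt.continuousWithinAt)
    (fun t ht => (hderiv t ht.1).hasDerivWithinAt) s ⟨hs, le_rfl⟩
  simp only [h0, zero_add] at hconst
  linarith

theorem lt_comp_of_antitoneOn_modelTime_add {φ H σ : ℝ → ℝ} {r₀ c T : ℝ}
    (hφ' : ContinuousOn (deriv φ) (Ioo 0 r₀)) (hφ'pos : ∀ s ∈ Ioo 0 r₀, 0 < deriv φ s)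
    (hσ : ∀ s ≥ 0, σ s ∈ Ioo 0 r₀) (hσt : ∀ s ≥ 0, modelTime φ (σ 0) (σ s) = -s)
    (hH : ∀ t ≥ T, H t ∈ Ioo 0 r₀)
    (hdecay : AntitoneOn (fun t => modelTime φ (σ 0) (H t) + c * t) (Ici T))
    (hstart : H T < σ 0) (hc : 0 ≤ c) :
    ∀ t ≥ T, H t < σ (c * (t - T)) := by
  intro t ht
  have hs : 0 ≤ c * (t - T) := mul_nonneg hc (sub_nonneg.2 ht)
  have hΦ := strictMonoOn_modelTime hφ' hφ'pos (hσ 0 le_rfl)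
  refine (hΦ.lt_iff_lt (hH t ht) (hσ _ hs)).1 ?_
  have h0 : modelTime φ (σ 0) (σ 0) = 0 := intervalIntegral.integral_same
  linarith [hdecay self_mem_Ici ht ht, hσt _ hs, hΦ (hH T le_rfl) (hσ 0 le_rfl) hstart]

section AngleCondition

variable {V : Type*} [NormedAddCommGroup V] [InnerProductSpace ℝ V] {g f : V} {α D : ℝ}

theorem mul_norm_le_mul_inner_of_angle (hα : 0 ≤ α) (hD : 0 ≤ D)
    (hangle : α * (‖g‖ * ‖f‖) ≤ ⟪g, f⟫) (hKL : 1 ≤ D * ‖g‖) : α * ‖f‖ ≤ D * ⟪g, f⟫ :=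
  calc α * ‖f‖ = α * 1 * ‖f‖ := by ring
    _ ≤ α * (D * ‖g‖) * ‖f‖ := by gcongr
    _ = D * (α * (‖g‖ * ‖f‖)) := by ring
    _ ≤ D * ⟪g, f⟫ := by gcongr

theorem div_le_sq_mul_inner_of_angle {b : ℝ} (hα : 0 ≤ α) (hb : 0 < b) (hD : 0 ≤ D)
    (hangle : α * (‖g‖ * ‖f‖) ≤ ⟪g, f⟫) (hgf : ‖g‖ ≤ b * ‖f‖) (hKL : 1 ≤ D * ‖g‖) :
    α / b ≤ D ^ 2 * ⟪g, f⟫ :=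
  calc α / b = α / b * 1 := (mul_one _).symm
    _ ≤ α / b * (D * (b * ‖f‖)) := by gcongr; exact hKL.trans (by gcongr)
    _ = D * (α * ‖f‖) := by field_simp
    _ ≤ D * (D * ⟪g, f⟫) :=
      mul_le_mul_of_nonneg_left (mul_norm_le_mul_inner_of_angle hα hD hangle hKL) hD
    _ = D ^ 2 * ⟪g, f⟫ := by ring

theorem eq_zero_of_inner_eq_zero_of_angle (hα : 0 < α) (hangle : α * (‖g‖ * ‖f‖) ≤ ⟪g, f⟫)
    (hrest : g = 0 → f = 0) (h : ⟪g, f⟫ = 0) : f = 0 := by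
  have hprod : ‖g‖ * ‖f‖ = 0 :=
    le_antisymm (le_of_mul_le_mul_left (by rwa [mul_zero, ← h]) hα) (by positivity)
  rcases mul_eq_zero.1 hprod with hg | hf
  exacts [hrest (norm_eq_zero.1 hg), norm_eq_zero.1 hf]

end AngleCondition

section Flow

variable {V : Type*} [NormedAddCommGroup V] [InnerProductSpace ℝ V] [CompleteSpace V]
  {F : V → V} {E : V → ℝ} {u : ℝ → V} {uinf : V} {α : ℝ}

theorem hasDerivAt_energy_sub {t : ℝ} (hE : DifferentiableAt ℝ E (u t)) (c : ℝ)
    (hu : HasDerivAt u (-F (u t)) t) :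
    HasDerivAt (fun t => E (u t) - c) (-⟪gradient E (u t), F (u t)⟫) t := by
  refine ((hE.hasGradientAt.hasFDerivAt.comp_hasDerivAt t hu).sub_const c).congr_deriv ?_
  simp

theorem eventually_eq_or_forall_lt_energy (hE : Differentiable ℝ E)
    (hode : ∀ t ≥ 0, HasDerivAt u (-F (u t)) t) (hconv : Tendsto u atTop (𝓝 uinf)) (hα : 0 < α)
    (hangle : ∀ t ≥ 0, α * (‖gradient E (u t)‖ * ‖F (u t)‖) ≤ ⟪gradient E (u t), F (u t)⟫)
    (hrest : ∀ t ≥ 0, gradient E (u t) = 0 → F (u t) = 0) :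
    (∀ᶠ t in atTop, u t = uinf) ∨ ∀ t ≥ 0, E uinf < E (u t) := by
  have hH : ∀ t ≥ 0, HasDerivAt (fun t => E (u t) - E uinf) (-⟪gradient E (u t), F (u t)⟫) t :=
    fun t ht => hasDerivAt_energy_sub (hE _) _ (hode t ht)
  have hanti := antitoneOn_Ici_of_hasDerivAt_nonpos hH fun t ht =>
    neg_nonpos.2 <| (mul_nonneg hα.le (by positivity)).trans (hangle t ht.le)
  have hlim : Tendsto (fun t => E (u t) - E uinf) atTop (𝓝 0) := by
    simpa using ((hE.continuous.tendsto uinf).comp hconv).sub_const (E uinf)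
  by_cases hpos : ∀ t ≥ 0, E uinf < E (u t)
  · exact Or.inr hpos
  obtain ⟨t₁, ht₁, hle⟩ : ∃ t₁ ≥ 0, E (u t₁) ≤ E uinf := by simpa using hpos
  have hflat : ∀ t ≥ t₁, E (u t) - E uinf = 0 := fun t ht =>
    le_antisymm (by linarith [hanti ht₁ (ht₁.trans ht) ht])
      (le_of_tendsto hlim (eventually_atTop.2
        ⟨t, fun s hs => hanti (ht₁.trans ht) (ht₁.trans (ht.trans hs)) hs⟩))
  have hstop : ∀ t > t₁, F (u t) = 0 := by
    intro t ht
    have h0 : HasDerivAt (fun t => E (u t) - E uinf) 0 t :=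
      (hasDerivAt_const t 0).congr_of_eventuallyEq
        (eventually_of_mem (Ioi_mem_nhds ht) fun s hs => hflat s (le_of_lt hs))
    exact eq_zero_of_inner_eq_zero_of_angle hα (hangle t (ht₁.trans ht.le))
      (hrest t (ht₁.trans ht.le)) (neg_eq_zero.1 ((hH t (ht₁.trans ht.le)).unique h0))
  refine Or.inl ?_
  filter_upwards [eventually_gt_atTop t₁] with t ht
  have hstill := norm_sub_le_of_norm_deriv_le_neg_deriv_s10 (ζ := fun _ => 0) (ζ' := fun _ => 0)
    (fun s hs => hode s (ht₁.trans (ht.le.trans hs))) (fun s _ => hasDerivAt_const s 0)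
    (fun s hs => by simp [hstop s (ht.trans_le hs)]) (fun _ _ => le_rfl) hconv
  simpa [sub_eq_zero] using hstill

end Flow

theorem exists_mul_norm_sub_le_comp_of_energy_pos {N : ℕ}
    {F : EuclideanSpace ℝ (Fin N) → EuclideanSpace ℝ (Fin N)} {E : EuclideanSpace ℝ (Fin N) → ℝ}
    {u : ℝ → EuclideanSpace ℝ (Fin N)} {uinf : EuclideanSpace ℝ (Fin N)} {α b η r₀ : ℝ}
    {φ σ : ℝ → ℝ} (hE : Differentiable ℝ E)
    (hode : ∀ t ≥ 0, HasDerivAt u (-F (u t)) t) (hconv : Tendsto u atTop (𝓝 uinf))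
    (hα : 0 < α) (hb : 0 < b)
    (hangle : ∀ t ≥ 0, α * (‖gradient E (u t)‖ * ‖F (u t)‖) ≤ ⟪gradient E (u t), F (u t)⟫)
    (hgb : ∀ t ≥ 0, ‖gradient E (u t)‖ ≤ b * ‖F (u t)‖) (hpos : ∀ t ≥ 0, E uinf < E (u t))
    (hφ : DesingOn E uinf η r₀ φ) (hσ : ∀ s ≥ 0, σ s ∈ Ioo 0 r₀)
    (hσt : ∀ s ≥ 0, modelTime φ (σ 0) (σ s) = -s) :
    ∃ c > 0, ∃ T, ∀ t ≥ T, α * ‖u t - uinf‖ ≤ φ (σ (c * (t - T))) := by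
  obtain ⟨-, hη, -, hφnn, -, hφd, hφ'c, hφ'pos, hEr₀, hKL⟩ := hφ
  set H : ℝ → ℝ := fun t => E (u t) - E uinf
  have hH : ∀ t ≥ 0, HasDerivAt H (-⟪gradient E (u t), F (u t)⟫) t :=
    fun t ht => hasDerivAt_energy_sub (hE _) _ (hode t ht)
  have hlim : Tendsto H atTop (𝓝 0) := by
    simpa using ((hE.continuous.tendsto uinf).comp hconv).sub_const (E uinf)
  obtain ⟨T, hT⟩ := eventually_atTop.1 <| (eventually_ge_atTop (0 : ℝ)).and <|
    (hconv.eventually_mem (ball_mem_nhds uinf hη)).and (hlim.eventually_lt_const (hσ 0 le_rfl).1)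
  have hHmem : ∀ t ≥ T, H t ∈ Ioo 0 r₀ := fun t ht =>
    ⟨sub_pos.2 (hpos t (hT t ht).1), (le_abs_self _).trans_lt (hEr₀ _ (hT t ht).2.1)⟩
  have hKLt : ∀ t ≥ T, 1 ≤ deriv φ (H t) * ‖gradient E (u t)‖ := fun t ht => by
    have h := hKL _ (hT t ht).2.1 (hpos t (hT t ht).1).ne'
    rwa [abs_of_pos (sub_pos.2 (hpos t (hT t ht).1))] at h
  have hlen : ∀ t ≥ T, α * ‖u t - uinf‖ ≤ φ (H t) := by
    intro t ht
    rw [← le_div_iff₀' hα]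
    refine norm_sub_le_of_norm_deriv_le_neg_deriv_s10 (fun s hs => hode s (hT s (ht.trans hs)).1)
      (fun s hs => ((hφd _ (hHmem s (ht.trans hs))).hasDerivAt.comp s
        (hH s (hT s (ht.trans hs)).1)).div_const α) (fun s hs => ?_)
      (fun s hs => div_nonneg (hφnn _ (Ioo_subset_Ico_self (hHmem s (ht.trans hs)))) hα.le) hconv
    have hs' := ht.trans hs
    rw [norm_neg, mul_neg, neg_div, neg_neg, le_div_iff₀' hα]
    exact mul_norm_le_mul_inner_of_angle hα.le (hφ'pos _ (hHmem s hs')).le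
      (hangle s (hT s hs').1) (hKLt s hs')
  have hdecay : AntitoneOn (fun t => modelTime φ (σ 0) (H t) + α / b * t) (Ici T) := by
    refine antitoneOn_Ici_of_hasDerivAt_nonpos (fun t ht =>
      ((hasDerivAt_modelTime hφ'c (hσ 0 le_rfl) (hHmem t ht)).comp t (hH t (hT t ht).1)).add
        ((hasDerivAt_id' t).const_mul _)) fun t ht => ?_
    have hrate := div_le_sq_mul_inner_of_angle hα.le hb (hφ'pos _ (hHmem t ht.le)).le
      (hangle t (hT t ht.le).1) (hgb t (hT t ht.le).1) (hKLt t ht.le)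
    linarith
  have hcomp := lt_comp_of_antitoneOn_modelTime_add hφ'c hφ'pos hσ hσt hHmem hdecay
    (hT T le_rfl).2.2 (by positivity)
  have hφmono : StrictMonoOn φ (Ioo 0 r₀) :=
    strictMonoOn_of_deriv_pos (convex_Ioo 0 r₀)
      (fun x hx => (hφd x hx).continuousAt.continuousWithinAt)
      (fun x hx => hφ'pos x (by rwa [interior_Ioo] at hx))
  refine ⟨α / b, by positivity, T, fun t ht => (hlen t ht).trans ?_⟩
  have hs : 0 ≤ α / b * (t - T) := mul_nonneg (by positivity) (sub_nonneg.2 ht)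
  exact hφmono.monotoneOn (hHmem t ht) (hσ _ hs) (hcomp t ht).le

theorem stmt10_general {N : ℕ} (F : EuclideanSpace ℝ (Fin N) → EuclideanSpace ℝ (Fin N))
    (E : EuclideanSpace ℝ (Fin N) → ℝ) (hE : ContDiff ℝ 2 E)
    (αR : ℝ → ℝ)
    (hqg : ∀ R > (0:ℝ), 0 < αR R ∧
      (∀ v ∈ closedBall (0 : EuclideanSpace ℝ (Fin N)) R,
        αR R * (‖gradient E v‖ * ‖F v‖) ≤ ⟪gradient E v, F v⟫) ∧
      (∀ v ∈ closedBall (0 : EuclideanSpace ℝ (Fin N)) R,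
        (gradient E v = 0 ↔ F v = 0)))
    (hbound : ∀ R > (0:ℝ), ∃ b > (0:ℝ),
      ∀ v ∈ closedBall (0 : EuclideanSpace ℝ (Fin N)) R, ‖gradient E v‖ ≤ b * ‖F v‖)
    (u : ℝ → EuclideanSpace ℝ (Fin N))
    (hode : ∀ t ≥ (0:ℝ), HasDerivAt u (-(F (u t))) t)
    (uinf : EuclideanSpace ℝ (Fin N))
    (hconv : Tendsto u atTop (𝓝 uinf))
    (η r₀ : ℝ) (φ : ℝ → ℝ) (hφ : DesingOn E uinf η r₀ φ)
    (ψ : ℝ → ℝ) (hψ : ∀ s ∈ Ico (0:ℝ) r₀, ψ (φ s) = s)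
    (hψd : ∀ y ∈ φ '' Ioo (0:ℝ) r₀, DifferentiableAt ℝ ψ y)
    (γ : ℝ → ℝ) (hγmem : ∀ t ≥ (0:ℝ), γ t ∈ φ '' Ioo (0:ℝ) r₀)
    (hγode : ∀ t ≥ (0:ℝ), HasDerivAt γ (-(deriv ψ (γ t))) t) :
    ∃ c > 0, ∃ d > 0, ∃ t₀ : ℝ, ∀ᶠ t in atTop, ‖u t - uinf‖ ≤ d * γ (c * t + t₀) := by
  obtain ⟨-, -, -, hφnn, -, hφd, hφ'c, -⟩ := id hφ
  obtain ⟨R, hR, huR⟩ := exists_pos_closedBall_of_tendsto_atTop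
    (fun t ht => (hode t ht).continuousAt.continuousWithinAt) hconv
  obtain ⟨hα, hangle, hrest⟩ := hqg R hR
  obtain ⟨b, hb, hgb⟩ := hbound R hR
  have hE' : Differentiable ℝ E := hE.differentiable two_ne_zero
  have hψ' : LeftInvOn ψ φ (Ioo 0 r₀) := fun s hs => hψ s (Ioo_subset_Ico_self hs)
  rcases eventually_eq_or_forall_lt_energy hE' hode hconv hα (fun t ht => hangle _ (huR t ht))
    (fun t ht => (hrest _ (huR t ht)).1) with hstill | hpos
  · refine ⟨1, one_pos, 1, one_pos, 0, ?_⟩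
    filter_upwards [hstill, eventually_ge_atTop 0] with t ht ht0
    obtain ⟨s, hs, hγs⟩ := hγmem (1 * t + 0) (by linarith)
    rw [ht, sub_self, norm_zero, ← hγs, one_mul]
    exact hφnn s (Ioo_subset_Ico_self hs)
  obtain ⟨c, hc, T, hle⟩ := exists_mul_norm_sub_le_comp_of_energy_pos hE' hode hconv hα hb
    (fun t ht => hangle _ (huR t ht)) (fun t ht => hgb _ (huR t ht)) hpos hφ
    (fun s hs => hψ'.mapsTo (surjOn_image φ _) (hγmem s hs))
    (modelTime_comp_solution hψ' hψd hφd hφ'c hγmem hγode)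
  refine ⟨c, hc, 1 / αR R, by positivity, -(c * T), eventually_atTop.2 ⟨T, fun t ht => ?_⟩⟩
  have hs : 0 ≤ c * (t - T) := mul_nonneg hc.le (sub_nonneg.2 ht)
  rw [show c * t + -(c * T) = c * (t - T) by ring, ← hψ'.rightInvOn_image (hγmem _ hs),
    one_div_mul_eq_div, le_div_iff₀' hα]
  exact hle t ht

theorem stmt10 {N : ℕ} (F : EuclideanSpace ℝ (Fin N) → EuclideanSpace ℝ (Fin N))
    (hF : LocallyLipschitz F)
    (E : EuclideanSpace ℝ (Fin N) → ℝ) (hE : ContDiff ℝ 2 E)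
    (αR : ℝ → ℝ)
    (hqg : ∀ R > (0:ℝ), 0 < αR R ∧
      (∀ v ∈ closedBall (0 : EuclideanSpace ℝ (Fin N)) R,
        αR R * (‖gradient E v‖ * ‖F v‖) ≤ ⟪gradient E v, F v⟫) ∧
      (∀ v ∈ closedBall (0 : EuclideanSpace ℝ (Fin N)) R,
        (gradient E v = 0 ↔ F v = 0)))
    (hKL : ∀ x, KLAt E x)
    (hbound : ∀ R > (0:ℝ), ∃ b > (0:ℝ),
      ∀ v ∈ closedBall (0 : EuclideanSpace ℝ (Fin N)) R, ‖gradient E v‖ ≤ b * ‖F v‖)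
    (u : ℝ → EuclideanSpace ℝ (Fin N))
    (hode : ∀ t ≥ (0:ℝ), HasDerivAt u (-(F (u t))) t)
    (uinf : EuclideanSpace ℝ (Fin N)) (hrest : F uinf = 0)
    (hconv : Tendsto u atTop (𝓝 uinf))
    (η r₀ : ℝ) (φ : ℝ → ℝ) (hφ : DesingOn E uinf η r₀ φ)
    (β s₀ : ℝ) (hβ : 0 < β) (hs₀ : 0 < s₀)
    (hlow : ∀ s ∈ Ioo (0:ℝ) s₀, β / Real.sqrt s ≤ deriv φ s)
    (ψ : ℝ → ℝ) (hψ : ∀ s ∈ Ico (0:ℝ) r₀, ψ (φ s) = s)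
    (hψd : ∀ y ∈ φ '' Ioo (0:ℝ) r₀, DifferentiableAt ℝ ψ y)
    (γ : ℝ → ℝ) (hγmem : ∀ t ≥ (0:ℝ), γ t ∈ φ '' Ioo (0:ℝ) r₀)
    (hγode : ∀ t ≥ (0:ℝ), HasDerivAt γ (-(deriv ψ (γ t))) t) :
    ∃ c > 0, ∃ d > 0, ∃ t₀ : ℝ, ∀ᶠ t in atTop, ‖u t - uinf‖ ≤ d * γ (c * t + t₀) :=
  stmt10_general F E hE αR hqg hbound u hode uinf hconv η r₀ φ hφ ψ hψ hψd γ hγmem hγode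
end
end
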